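/- arXiv:2411.14693 — 5 statements merged into one kernel-verified Lean document; each statement's English description precedes it below -/
import Mathlib

section
/- Let S be a finite monoid and let Γ ⊆ S × S be a set of pairs such that {(a,b)^♯ : (a,b) ∈ Γ} is exactly the set of all minimal two-sided congruences of S. Then an action μ : X × S → X of S (as a semigroup) is faithful if and only if for every (a,b) ∈ Γ there exists x ∈ X with μ(x,a) ≠ μ(x,b). -/
/-!
The elements of `S` acting identically form a congruence, the kernel of the action, and the
action is faithful iff this kernel is trivial. The congruence lattice of a finite monoid is
finite, hence atomic, so the kernel is trivial iff it lies above no minimal congruence, that is,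
above no `(a,b)^♯` with `(a,b) ∈ Γ`; and `(a,b)^♯` lies below the kernel iff `a` and `b` act
identically.
-/

namespace DiagramDeg

/-- Vertex set of a partition diagram: `inl` = upper row, `inr` = lower (dashed) row. -/
abbrev V (n : ℕ) := Sum (Fin n) (Fin n)

/-- A partition diagram on `n̲ ∪ n̲′`: a set partition, i.e. an equivalence, of the `2n` vertices. -/
abbrev PD (n : ℕ) := Setoid (V n)

/-- Three-row vertex set for the product graph:
`inl` = top row, `inr ∘ inl` = middle row, `inr ∘ inr` = bottom row. -/
abbrev W (n : ℕ) := Sum (Fin n) (V n)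

/-- Embedding of the vertices of the first factor (top and middle rows). -/
def topmid {n : ℕ} : V n → W n := Sum.elim Sum.inl (fun j => Sum.inr (Sum.inl j))

/-- Embedding of the vertices of the second factor (middle and bottom rows). -/
def midbot {n : ℕ} : V n → W n :=
  Sum.elim (fun i => Sum.inr (Sum.inl i)) (fun j => Sum.inr (Sum.inr j))

/-- Embedding of the outer (top and bottom) rows. -/
def outer {n : ℕ} : V n → W n := Sum.elim Sum.inl (fun j => Sum.inr (Sum.inr j))

/-- The edges of the product graph `Π(α,β)`. -/
def stepRel {n : ℕ} (α β : PD n) : W n → W n → Prop := fun u v =>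
  (∃ x y : V n, α.r x y ∧ u = topmid x ∧ v = topmid y) ∨
  (∃ x y : V n, β.r x y ∧ u = midbot x ∧ v = midbot y)

/-- The product `αβ` of partition diagrams: `x, y` lie in the same block of `αβ` iff they are
connected in the product graph. -/
def comp {n : ℕ} (α β : PD n) : PD n :=
  Setoid.comap outer (Relation.EqvGen.setoid (stepRel α β))

/-- The identity partition diagram, with blocks `{i, i′}`. -/
def idPD (n : ℕ) : PD n := Setoid.ker (Sum.elim id id)

/-- The `*` involution of a diagram: interchange dashed and undashed vertices. -/
def starPD {n : ℕ} (α : PD n) : PD n := Setoid.comap (Sum.elim Sum.inr Sum.inl) α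

/-- The rank of a diagram: the number of transversal blocks, i.e. blocks meeting both rows. -/
noncomputable def rank {n : ℕ} (α : PD n) : ℕ :=
  Nat.card {c : Quotient α //
    (∃ i : Fin n, Quotient.mk α (Sum.inl i) = c) ∧
    (∃ j : Fin n, Quotient.mk α (Sum.inr j) = c)}

/-- A projection: `ε² = ε = ε*`. -/
def IsProjection {n : ℕ} (α : PD n) : Prop := comp α α = α ∧ starPD α = α

/-- `ker(α)`: the restriction of `α` to the upper row. -/
def upperKer {n : ℕ} (α : PD n) : Fin n → Fin n → Prop := fun x y =>
  α.r (Sum.inl x) (Sum.inl y)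

/-- Every block has size at most 2 (defining property of the partial Brauer monoid). -/
def BlocksAtMostTwo {n : ℕ} (α : PD n) : Prop :=
  ∀ x y z : V n, α.r x y → α.r x z → x = y ∨ x = z ∨ y = z

/-- Every block has size exactly 2 (defining property of the Brauer monoid). -/
def BlocksExactlyTwo {n : ℕ} (α : PD n) : Prop :=
  BlocksAtMostTwo α ∧ ∀ x : V n, ∃ y : V n, y ≠ x ∧ α.r x y

/-- Position of a vertex in the boundary order `1, …, n, n′, …, 1′` of the rectangle. -/
def vpos (n : ℕ) : V n → ℕ := Sum.elim (fun i => (i : ℕ)) (fun j => 2 * n - 1 - (j : ℕ))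

/-- Planarity: the partition is non-crossing with respect to the boundary order of the
rectangle spanned by the vertices (two blocks never interleave). -/
def IsPlanar {n : ℕ} (α : PD n) : Prop :=
  ¬ ∃ x y z w : V n, α.r x y ∧ α.r z w ∧ ¬ α.r x z ∧
      vpos n x < vpos n z ∧ vpos n z < vpos n y ∧ vpos n y < vpos n w

/-- The number of projections of rank `r` satisfying `pred`. -/
noncomputable def projCount (n : ℕ) (pred : PD n → Prop) (r : ℕ) : ℕ :=
  Nat.card {α : PD n // pred α ∧ IsProjection α ∧ rank α = r}

/-- A right action of a semigroup (we only use the `Mul`). -/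
def IsRAction {S : Type*} {X : Type*} [Mul S] (μ : X → S → X) : Prop :=
  ∀ (x : X) (a b : S), μ (μ x a) b = μ x (a * b)

/-- An action is faithful if distinct elements act distinctly. -/
def IsFaithful {S : Type*} {X : Type*} (μ : X → S → X) : Prop :=
  ∀ a b : S, (∀ x : X, μ x a = μ x b) → a = b

/-- `deg(S)`: the least `m ≥ 1` such that `S` has a faithful action on an `m`-element set,
equivalently embeds in the full transformation monoid `𝒯_m`. -/
noncomputable def transDeg (S : Type*) [Mul S] : ℕ :=
  sInf {m : ℕ | 1 ≤ m ∧ ∃ μ : Fin m → S → Fin m, IsRAction μ ∧ IsFaithful μ}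

/-- `deg′(S)`: the least `m ≥ 1` such that `S` embeds in the partial transformation
monoid `𝒫𝒯_m`, viewed as the monoid of self-maps of `Option (Fin m)` fixing `none`. -/
noncomputable def pTransDeg (S : Type*) [Mul S] : ℕ :=
  sInf {m : ℕ | 1 ≤ m ∧ ∃ μ : Option (Fin m) → S → Option (Fin m),
    IsRAction μ ∧ (∀ a : S, μ none a = none) ∧ IsFaithful μ}

/-- A right congruence: a right-compatible equivalence. -/
def IsRightCongruence {S : Type*} [Mul S] (σ : Setoid S) : Prop :=
  ∀ a b s : S, σ.r a b → σ.r (a * s) (b * s)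

/-- `deg_rc(S)`: the least `m ≥ 1` such that `S` has a faithful right congruence action
(the action on `S/σ` by `[x]·a = [xa]`) of degree `m`. -/
noncomputable def rcDeg (S : Type*) [Monoid S] : ℕ :=
  sInf {m : ℕ | 1 ≤ m ∧ ∃ σ : Setoid S, IsRightCongruence σ ∧
    Nat.card (Quotient σ) = m ∧
    ∀ a b : S, (∀ x : S, Quotient.mk σ (x * a) = Quotient.mk σ (x * b)) → a = b}

/-- A two-sided congruence, as a relation. -/
def IsTwoSidedCong {S : Type*} [Mul S] (τ : S → S → Prop) : Prop :=
  Equivalence τ ∧ ∀ a b s : S, τ a b → τ (a * s) (b * s) ∧ τ (s * a) (s * b)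

/-- Bell numbers: the number of set partitions (equivalence relations) of a `k`-set. -/
noncomputable def bell (k : ℕ) : ℕ := Nat.card (Setoid (Fin k))

/-- Involution numbers: the number of self-inverse permutations of a `k`-set. -/
noncomputable def involNum (k : ℕ) : ℕ :=
  Nat.card {f : Equiv.Perm (Fin k) // ∀ x, f (f x) = x}

/-- Motzkin numbers, via the standard binomial–Catalan formula. -/
def motzkin (k : ℕ) : ℕ := ∑ i ∈ Finset.range (k / 2 + 1), k.choose (2 * i) * catalan i

end DiagramDeg

theorem eq_bot_iff_forall_isAtom_not_le {α : Type*} [PartialOrder α] [OrderBot α] [IsAtomic α]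
    {b : α} : b = ⊥ ↔ ∀ a : α, IsAtom a → ¬ a ≤ b := by
  refine ⟨fun hb a ha hab => ha.1 (le_bot_iff.mp (hb ▸ hab)), fun h => ?_⟩
  obtain hb | ⟨a, ha, hab⟩ := eq_bot_or_exists_atom_le b
  · exact hb
  · exact absurd hab (h a ha)

namespace Con

variable {M : Type*} [Mul M]

instance [Finite M] : Finite (Con M) := Finite.of_injective _ DFunLike.coe_injective

theorem conGen_pair_le_iff {a b : M} {c : Con M} :
    conGen (fun x y => x = a ∧ y = b) ≤ c ↔ c a b := by
  rw [conGen_le]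
  exact ⟨fun h => h a b ⟨rfl, rfl⟩, by rintro h x y ⟨rfl, rfl⟩; exact h⟩

end Con

namespace DiagramDeg

section

variable {S X : Type*} [Mul S] {μ : X → S → X}

def IsRAction.ker (hact : IsRAction μ) : Con S where
  r a b := ∀ x, μ x a = μ x b
  iseqv := ⟨fun _ _ => rfl, fun h x => (h x).symm, fun h h' x => (h x).trans (h' x)⟩
  mul' {a b c d} hab hcd x := by rw [← hact, ← hact, hab, hcd]

theorem IsRAction.ker_apply (hact : IsRAction μ) {a b : S} :
    hact.ker a b ↔ ∀ x, μ x a = μ x b :=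
  Iff.rfl

theorem IsRAction.isFaithful_iff_ker_eq_bot (hact : IsRAction μ) :
    IsFaithful μ ↔ hact.ker = ⊥ := by
  rw [eq_bot_iff, Con.le_def]
  rfl

end

/-- Let `S` be a finite monoid and `Γ ⊆ S × S` a set of pairs such that
`{(a,b)^♯ : (a,b) ∈ Γ}` is exactly the set of minimal two-sided congruences of `S`.
Then an action `μ : X × S → X` is faithful iff it separates every pair from `Γ`. -/
theorem statement12 (S : Type) [Monoid S] [Finite S] (Γ : Set (S × S))
    (hΓ : {c : Con S | ∃ p ∈ Γ, c = conGen (fun x y => x = p.1 ∧ y = p.2)} =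
          {c : Con S | c ≠ ⊥ ∧ ∀ d : Con S, d < c → d = ⊥})
    (X : Type) (μ : X → S → X) (hact : IsRAction μ) :
    IsFaithful μ ↔ ∀ p ∈ Γ, ∃ x : X, μ x p.1 ≠ μ x p.2 := by
  have hatom (c : Con S) : IsAtom c ↔ ∃ p ∈ Γ, c = conGen (fun x y => x = p.1 ∧ y = p.2) :=
    (Set.ext_iff.mp hΓ c).symm
  have hsep (p : S × S) :
      ¬ conGen (fun x y => x = p.1 ∧ y = p.2) ≤ hact.ker ↔ ∃ x, μ x p.1 ≠ μ x p.2 := by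
    rw [Con.conGen_pair_le_iff, hact.ker_apply, not_forall]
  rw [hact.isFaithful_iff_ker_eq_bot, eq_bot_iff_forall_isAtom_not_le]
  constructor
  · exact fun h p hp => (hsep p).mp (h _ ((hatom _).mpr ⟨p, hp, rfl⟩))
  · intro h c hc
    obtain ⟨p, hp, rfl⟩ := (hatom c).mp hc
    exact (hsep p).mpr (h p hp)

end DiagramDeg
end

section
/- Let S be a semigroup, and let a, b ∈ S and C ⊆ S be such that every right congruence of S that separates {a,b} also separates C. Let μ : X × S → X be an action of S and x ∈ X an element with μ(x,a) ≠ μ(x,b). Then the map C → X, c ↦ μ(x,c), is injective. -/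
namespace DiagramDeg

/-- A right congruence `σ` separates `B` if no two distinct elements of `B` are `σ`-related. -/
def Separates {S : Type*} (σ : Setoid S) (B : Set S) : Prop :=
  ∀ u ∈ B, ∀ v ∈ B, u ≠ v → ¬ σ.r u v

/-- Let `S` be a semigroup, `a, b ∈ S`, `C ⊆ S` such that every right
congruence separating `{a,b}` separates `C`. If `μ : X × S → X` is an action and `x ∈ X`
satisfies `μ(x,a) ≠ μ(x,b)`, then `c ↦ μ(x,c)` is injective on `C`. -/
theorem statement13 (S : Type) [Semigroup S] (a b : S) (C : Set S)
    (h : ∀ σ : Setoid S, IsRightCongruence σ →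
      Separates σ ({a, b} : Set S) → Separates σ C)
    (X : Type) (μ : X → S → X) (hact : IsRAction μ)
    (x : X) (hx : μ x a ≠ μ x b) :
    Set.InjOn (fun c => μ x c) C := by
  set σ : Setoid S := ⟨fun u v => μ x u = μ x v,
    ⟨fun _ => rfl, fun h => h.symm, fun h1 h2 => h1.trans h2⟩⟩ with hσ
  have hrc : IsRightCongruence σ := by
    intro u v s huv
    show μ x (u * s) = μ x (v * s)
    rw [← hact x u s, ← hact x v s, huv]
  have hsep : Separates σ ({a, b} : Set S) := by
    intro u hu v hv huv hr
    simp only [Set.mem_insert_iff, Set.mem_singleton_iff] at hu hv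
    rcases hu with rfl | rfl <;> rcases hv with rfl | rfl
    · exact huv rfl
    · exact hx hr
    · exact hx hr.symm
    · exact huv rfl
  have hC := h σ hrc hsep
  intro c hc c' hc' heq
  by_contra hne
  exact hC c hc c' hc' hne heq

end DiagramDeg
end

section
/- Let S be a regular *-semigroup with set of projections P = {p ∈ S : p² = p = p*}, and for p ∈ P and a ∈ S write p^a = a*pa, which lies in P. Let Q ⊆ P be closed under this action (p ∈ Q, a ∈ S imply p^a ∈ Q). Let ≼ be a preorder on S that is left-compatible (a ≼ b implies sa ≼ sb for all s ∈ S) and contains the Green ≤_R preorder (equivalently, as ≼ a for all a, s ∈ S), and let ≈ be the equivalence ≼ ∩ ≽. Let − be a symbol not in Q and Q⁻ = Q ∪ {−}. Then the map μ : Q⁻ × S → Q⁻ defined by μ(p,a) = p^a if p ∈ Q and p ≈ pa, and μ(p,a) = − otherwise (in particular μ(−,a) = − for all a), is an action of S on Q⁻; if S is a monoid, it is a monoid action. -/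
namespace DiagramDeg

/-- Let `S` be a regular *-semigroup with projection set `P`, let `Q ⊆ P`
be closed under `p ↦ p^a = a*pa`, and let `≼` be a left-compatible preorder on `S`
containing `≤_R`, with induced equivalence `≈ = ≼ ∩ ≽`. Then the map
`μ(p,a) = p^a` if `p ∈ Q` and `p ≈ pa`, `μ(p,a) = −` otherwise, is an action of `S` on
`Q⁻ = Q ∪ {−}`; if `S` is a monoid it is a monoid action. -/
theorem statement14 (S : Type) [Semigroup S] (st : S → S)
    (hst1 : ∀ a : S, st (st a) = a)
    (hst2 : ∀ a : S, a * st a * a = a)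
    (hst3 : ∀ a b : S, st (a * b) = st b * st a)
    (Q : Set S) (hQP : ∀ p ∈ Q, p * p = p ∧ st p = p)
    (hQc : ∀ p ∈ Q, ∀ a : S, st a * p * a ∈ Q)
    (pre : S → S → Prop)
    (hrefl : ∀ a : S, pre a a)
    (htrans : ∀ a b c : S, pre a b → pre b c → pre a c)
    (hleft : ∀ a b s : S, pre a b → pre (s * a) (s * b))
    (hR : ∀ a s : S, pre (a * s) a) :
    ∃ μ : Option Q → S → Option Q,
      -- μ is an action:
      IsRAction μ ∧
      -- given by the stated formula:
      (∀ a : S, μ none a = none) ∧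
      (∀ (p : Q) (a : S),
        ((pre (p : S) ((p : S) * a) ∧ pre ((p : S) * a) (p : S)) →
          μ (some p) a = some ⟨st a * (p : S) * a, hQc p.1 p.2 a⟩) ∧
        (¬ (pre (p : S) ((p : S) * a) ∧ pre ((p : S) * a) (p : S)) →
          μ (some p) a = none)) ∧
      -- if S is a monoid, μ is a monoid action:
      (∀ one : S, (∀ s : S, one * s = s ∧ s * one = s) → ∀ x : Option Q, μ x one = x) := by
  classical
  -- basic facts
  have hpp : ∀ p ∈ Q, p * p = p := fun p hp => (hQP p hp).1
  have hps : ∀ p ∈ Q, st p = p := fun p hp => (hQP p hp).2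
  -- key identity 1 : p * a * (st a * p * a) = p * a
  have key1 : ∀ p ∈ Q, ∀ a : S, p * a * (st a * p * a) = p * a := by
    intro p hp a
    have h := hst2 (p * a)
    rw [hst3, hps p hp] at h
    calc p * a * (st a * p * a)
        = p * a * (st a * (p * (p * a))) := by
          rw [show p * (p * a) = p * a by rw [← mul_assoc, hpp p hp]]
          simp only [mul_assoc]
      _ = p * a * (st a * p) * (p * a) := by simp only [mul_assoc]
      _ = p * a := h
  -- key identity 2 : (st a * p * a) * (st a * p) = st a * p
  have key2 : ∀ p ∈ Q, ∀ a : S, (st a * p * a) * (st a * p) = st a * p := by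
    intro p hp a
    have h := hst2 (st a * p)
    rw [hst3, hps p hp, hst1] at h
    calc (st a * p * a) * (st a * p)
        = st a * (p * (p * (a * (st a * p)))) := by
          rw [show p * (p * (a * (st a * p))) = p * (a * (st a * p)) by
            rw [← mul_assoc, hpp p hp]]
          simp only [mul_assoc]
      _ = st a * p * (p * a) * (st a * p) := by simp only [mul_assoc]
      _ = st a * p := h
  -- idempotency of p^a
  have idem : ∀ p ∈ Q, ∀ a : S, (st a * p * a) * (st a * p * a) = st a * p * a := by
    intro p hp a
    calc (st a * p * a) * (st a * p * a)
        = (st a * p * a) * (st a * p) * a := by simp only [mul_assoc]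
      _ = st a * p * a := by rw [key2 p hp a]
  refine ⟨fun x a => x.bind (fun p =>
      if pre (p : S) ((p : S) * a) then some ⟨st a * (p : S) * a, hQc p.1 p.2 a⟩ else none),
    ?_, fun a => rfl, ?_, ?_⟩
  · -- the action law
    intro x a b
    cases x with
    | none => rfl
    | some p =>
      obtain ⟨p, hp⟩ := p
      simp only [Option.bind]
      by_cases h1 : pre p (p * a)
      · rw [if_pos h1]
        simp only [Option.bind]
        by_cases h2 : pre (st a * p * a) (st a * p * a * b)
        · rw [if_pos h2, if_pos ?_]
          · -- element equality
            congr 1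
            apply Subtype.ext
            show st b * (st a * p * a) * b = st (a * b) * p * (a * b)
            rw [hst3]
            simp only [mul_assoc]
          · -- forward: pre p (p * (a * b))
            have h3 := hleft _ _ (p * a) h2
            rw [key1 p hp a] at h3
            rw [show p * a * (st a * p * a * b) = p * a * b by
              rw [show st a * p * a * b = (st a * p * a) * b from rfl, ← mul_assoc,
                key1 p hp a]] at h3
            have := htrans _ _ _ h1 h3
            rwa [mul_assoc] at this
        · rw [if_neg h2, if_neg ?_]
          intro hc
          apply h2
          -- backward : from pre p (p*(a*b)) deduce pre (p^a) (p^a * b)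
          have h3 := hleft _ _ (st a * p * a * st a) hc
          have e1 : st a * p * a * st a * p = st a * p := by
            calc st a * p * a * st a * p = (st a * p * a) * (st a * p) := by
                  simp only [mul_assoc]
              _ = st a * p := key2 p hp a
          have e2 : st a * p * a * st a * (p * (a * b)) = st a * p * a * b := by
            calc st a * p * a * st a * (p * (a * b))
                = ((st a * p * a) * (st a * p)) * (a * b) := by simp only [mul_assoc]
              _ = st a * p * (a * b) := by rw [key2 p hp a]
              _ = st a * p * a * b := by simp only [mul_assoc]
          rw [e1, e2] at h3
          exact htrans _ _ _ (hR (st a * p) a) h3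
      · rw [if_neg h1, if_neg ?_]
        intro hc
        apply h1
        have : pre (p * a * b) (p * a) := hR (p * a) b
        rw [mul_assoc] at this
        exact htrans _ _ _ hc this
  · -- the formula
    intro p a
    constructor
    · intro h
      simp only [Option.bind, if_pos h.1]
    · intro h
      simp only [Option.bind]
      rw [if_neg]
      intro hc
      exact h ⟨hc, hR (p : S) a⟩
  · -- monoid action
    intro one hone x
    cases x with
    | none => rfl
    | some p =>
      obtain ⟨p, hp⟩ := p
      simp only [Option.bind]
      rw [if_pos (by rw [(hone p).2]; exact hrefl p)]
      congr 1
      apply Subtype.ext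
      show st one * p * one = p
      have hso : st one = one := by
        have := hst2 one
        rw [(hone (st one)).1, (hone (st one)).2] at this
        exact this
      rw [hso, (hone p).1, (hone p).2]

end DiagramDeg
end

section
/- For every n ≥ 0, the number of projections of the partition monoid 𝒫_n of rank at most 2 equals (B(n+2) − B(n+1) + B(n))/2, where B(k) denotes the k-th Bell number. -/
namespace DiagramDeg
-- === my development ===
variable {n : ℕ}

def projRel (σ : Setoid (Fin n)) (T : Set (Fin n)) : V n → V n → Prop :=
  fun x y => match x, y with
  | .inl i, .inl j => σ.r i j
  | .inl i, .inr j => σ.r i j ∧ i ∈ T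
  | .inr i, .inl j => σ.r i j ∧ i ∈ T
  | .inr i, .inr j => σ.r i j

def Sat (σ : Setoid (Fin n)) (T : Set (Fin n)) : Prop :=
  ∀ i j, σ.r i j → i ∈ T → j ∈ T

def mkProj (σ : Setoid (Fin n)) (T : Set (Fin n)) (h : Sat σ T) : PD n where
  r := projRel σ T
  iseqv := by
    constructor
    · rintro (i | i) <;> exact σ.refl i
    · rintro (i | i) (j | j) hr
      · exact σ.symm hr
      · exact ⟨σ.symm hr.1, h i j hr.1 hr.2⟩
      · exact ⟨σ.symm hr.1, h i j hr.1 hr.2⟩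
      · exact σ.symm hr
    · rintro (i | i) (j | j) (k | k) h1 h2
      · exact σ.trans h1 h2
      · exact ⟨σ.trans h1 h2.1, h j i (σ.symm h1) h2.2⟩
      · exact σ.trans h1.1 h2.1
      · exact ⟨σ.trans h1.1 h2, h1.2⟩
      · exact ⟨σ.trans h1.1 h2, h1.2⟩
      · exact σ.trans h1.1 h2.1
      · exact ⟨σ.trans h1 h2.1, h j i (σ.symm h1) h2.2⟩
      · exact σ.trans h1 h2

lemma mkProj_r (σ : Setoid (Fin n)) (T : Set (Fin n)) (h : Sat σ T) (x y : V n) :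
    (mkProj σ T h).r x y ↔ projRel σ T x y := Iff.rfl

lemma star_mkProj (σ : Setoid (Fin n)) (T : Set (Fin n)) (h : Sat σ T) :
    starPD (mkProj σ T h) = mkProj σ T h := by
  apply Setoid.ext
  rintro (i | i) (j | j) <;> exact Iff.rfl

def wpos : W n → Fin n := Sum.elim id (Sum.elim id id)
def wrow : W n → ℕ := Sum.elim (fun _ => 0) (Sum.elim (fun _ => 1) (fun _ => 2))

def wRel (σ : Setoid (Fin n)) (T : Set (Fin n)) : W n → W n → Prop := fun u v =>
  σ.r (wpos u) (wpos v) ∧ (wrow u = wrow v ∨ wpos u ∈ T)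

lemma wRel_equiv (σ : Setoid (Fin n)) (T : Set (Fin n)) (h : Sat σ T) :
    Equivalence (wRel σ T) := by
  constructor
  · intro u; exact ⟨σ.refl _, Or.inl rfl⟩
  · rintro u v ⟨h1, h2 | h2⟩
    · exact ⟨σ.symm h1, Or.inl h2.symm⟩
    · exact ⟨σ.symm h1, Or.inr (h _ _ h1 h2)⟩
  · rintro u v w ⟨h1, h2⟩ ⟨h3, h4⟩
    refine ⟨σ.trans h1 h3, ?_⟩
    rcases h2 with h2 | h2
    · rcases h4 with h4 | h4
      · exact Or.inl (h2.trans h4)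
      · exact Or.inr (h _ _ (σ.symm h1) h4)
    · exact Or.inr h2

lemma step_le_wRel (σ : Setoid (Fin n)) (T : Set (Fin n)) (h : Sat σ T)
    (u v : W n) (hs : stepRel (mkProj σ T h) (mkProj σ T h) u v) : wRel σ T u v := by
  rcases hs with ⟨x, y, hr, rfl, rfl⟩ | ⟨x, y, hr, rfl, rfl⟩ <;>
    rcases x with i | i <;> rcases y with j | j
  · exact ⟨hr, Or.inl rfl⟩
  · exact ⟨hr.1, Or.inr hr.2⟩
  · exact ⟨hr.1, Or.inr hr.2⟩
  · exact ⟨hr, Or.inl rfl⟩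
  · exact ⟨hr, Or.inl rfl⟩
  · exact ⟨hr.1, Or.inr hr.2⟩
  · exact ⟨hr.1, Or.inr hr.2⟩
  · exact ⟨hr, Or.inl rfl⟩

lemma comp_mkProj (σ : Setoid (Fin n)) (T : Set (Fin n)) (h : Sat σ T) :
    comp (mkProj σ T h) (mkProj σ T h) = mkProj σ T h := by
  set α := mkProj σ T h with hα
  have key : ∀ u v, Relation.EqvGen (stepRel α α) u v → wRel σ T u v := by
    intro u v huv
    induction huv with
    | rel _ _ hs => exact step_le_wRel σ T h _ _ hs
    | refl u => exact (wRel_equiv σ T h).refl u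
    | symm _ _ _ ih => exact (wRel_equiv σ T h).symm ih
    | trans _ _ _ _ _ ih1 ih2 => exact (wRel_equiv σ T h).trans ih1 ih2
  apply Setoid.ext
  intro x y
  have hc : (comp α α) x y ↔ Relation.EqvGen (stepRel α α) (outer x) (outer y) := Iff.rfl
  rw [hc]
  constructor
  · intro hg
    have hw := key _ _ hg
    rcases x with i | i <;> rcases y with j | j
    · exact hw.1
    · rcases hw.2 with h2 | h2
      · simp [outer, wrow] at h2
      · exact ⟨hw.1, h2⟩
    · rcases hw.2 with h2 | h2
      · simp [outer, wrow] at h2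
      · exact ⟨hw.1, h2⟩
    · exact hw.1
  · intro hr
    rcases x with i | i <;> rcases y with j | j
    · exact Relation.EqvGen.rel _ _ (Or.inl ⟨Sum.inl i, Sum.inl j, hr, rfl, rfl⟩)
    · -- top i ~ mid i ~ bot j
      refine Relation.EqvGen.trans _ (Sum.inr (Sum.inl i)) _ ?_ ?_
      · exact Relation.EqvGen.rel _ _ (Or.inl ⟨Sum.inl i, Sum.inr i, ⟨σ.refl i, hr.2⟩, rfl, rfl⟩)
      · exact Relation.EqvGen.rel _ _ (Or.inr ⟨Sum.inl i, Sum.inr j, hr, rfl, rfl⟩)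
    · refine Relation.EqvGen.symm _ _ ?_
      have hr' : α.r (Sum.inl j) (Sum.inr i) := ⟨σ.symm hr.1, h _ _ hr.1 hr.2⟩
      refine Relation.EqvGen.trans _ (Sum.inr (Sum.inl j)) _ ?_ ?_
      · exact Relation.EqvGen.rel _ _
          (Or.inl ⟨Sum.inl j, Sum.inr j, ⟨σ.refl j, hr'.2⟩, rfl, rfl⟩)
      · exact Relation.EqvGen.rel _ _ (Or.inr ⟨Sum.inl j, Sum.inr i, hr', rfl, rfl⟩)
    · exact Relation.EqvGen.rel _ _ (Or.inr ⟨Sum.inr i, Sum.inr j, hr, rfl, rfl⟩)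

lemma isProjection_mkProj (σ : Setoid (Fin n)) (T : Set (Fin n)) (h : Sat σ T) :
    IsProjection (mkProj σ T h) :=
  ⟨comp_mkProj σ T h, star_mkProj σ T h⟩


lemma star_r (α : PD n) (h : starPD α = α) (x y : V n) :
    α.r (Sum.elim Sum.inr Sum.inl x) (Sum.elim Sum.inr Sum.inl y) ↔ α.r x y := by
  conv_rhs => rw [← h]
  exact Iff.rfl

lemma star_swap (α : PD n) (h : starPD α = α) (i j : Fin n) :
    α.r (Sum.inr i) (Sum.inr j) ↔ α.r (Sum.inl i) (Sum.inl j) :=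
  star_r α h (Sum.inl i) (Sum.inl j)

lemma star_mix (α : PD n) (h : starPD α = α) (i j : Fin n) :
    α.r (Sum.inr i) (Sum.inl j) ↔ α.r (Sum.inl i) (Sum.inr j) :=
  star_r α h (Sum.inl i) (Sum.inr j)

lemma key_lemma (α : PD n) (hp : IsProjection α) (i j : Fin n)
    (hij : α.r (Sum.inl i) (Sum.inr j)) : α.r (Sum.inl i) (Sum.inr i) := by
  have hji : α.r (Sum.inl j) (Sum.inr i) := α.symm ((star_mix α hp.2 i j).mpr hij)
  have hgen : Relation.EqvGen (stepRel α α) (outer (Sum.inl i)) (outer (Sum.inr i)) := by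
    refine Relation.EqvGen.trans _ (Sum.inr (Sum.inl j)) _ ?_ ?_
    · exact Relation.EqvGen.rel _ _ (Or.inl ⟨Sum.inl i, Sum.inr j, hij, rfl, rfl⟩)
    · exact Relation.EqvGen.rel _ _ (Or.inr ⟨Sum.inl j, Sum.inr i, hji, rfl, rfl⟩)
  have : (comp α α) (Sum.inl i) (Sum.inr i) := hgen
  rw [hp.1] at this
  exact this

/-- The upper-row restriction of a diagram. -/
def uSet (α : PD n) : Setoid (Fin n) := Setoid.comap Sum.inl α

/-- The transversal set of a projection. -/
def tSet (α : PD n) : Set (Fin n) := {i | α.r (Sum.inl i) (Sum.inr i)}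

lemma sat_of_proj (α : PD n) (hp : IsProjection α) : Sat (uSet α) (tSet α) := by
  intro i j hij hi
  have h1 : α.r (Sum.inl i) (Sum.inl j) := hij
  have h2 : α.r (Sum.inr i) (Sum.inr j) := (star_swap α hp.2 i j).mpr h1
  exact α.trans (α.trans (α.symm h1) hi) h2

lemma proj_eq_mkProj (α : PD n) (hp : IsProjection α) :
    α = mkProj (uSet α) (tSet α) (sat_of_proj α hp) := by
  apply Setoid.ext
  rintro (i | i) (j | j)
  · exact Iff.rfl
  · constructor
    · intro hij
      have hi : α.r (Sum.inl i) (Sum.inr i) := key_lemma α hp i j hij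
      have hσ : α.r (Sum.inl i) (Sum.inl j) :=
        (star_swap α hp.2 i j).mp (α.trans (α.symm hi) hij)
      exact ⟨hσ, hi⟩
    · rintro ⟨hσ, hi⟩
      exact α.trans hi ((star_swap α hp.2 i j).mpr hσ)
  · constructor
    · intro hij
      have hji : α.r (Sum.inl i) (Sum.inr j) := (star_mix α hp.2 i j).mp hij
      have hi : α.r (Sum.inl i) (Sum.inr i) := key_lemma α hp i j hji
      have hσ : α.r (Sum.inl i) (Sum.inl j) :=
        (star_swap α hp.2 i j).mp (α.trans (α.symm hi) hji)
      exact ⟨hσ, hi⟩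
    · rintro ⟨hσ, hi⟩
      exact (star_mix α hp.2 i j).mpr (α.trans hi ((star_swap α hp.2 i j).mpr hσ))
  · constructor
    · intro hij
      exact (star_swap α hp.2 i j).mp hij
    · intro hσ
      exact (star_swap α hp.2 i j).mpr hσ


attribute [local instance] Classical.propDecidable

noncomputable instance fintypeSetoid (X : Type*) [Finite X] : Fintype (Setoid X) :=
  have : Finite (Setoid X) :=
    Finite.of_injective (fun s : Setoid X => ⇑s)
      (fun _ _ h => Setoid.ext (fun x y => iff_of_eq (congrFun (congrFun h x) y)))
  Fintype.ofFinite _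

noncomputable instance fintypeQuot {X : Type*} [Finite X] (σ : Setoid X) :
    Fintype (Quotient σ) := Fintype.ofFinite _

/-- The number of transversals of `mkProj σ T`. -/
lemma rank_mkProj (σ : Setoid (Fin n)) (T : Set (Fin n)) (h : Sat σ T) :
    rank (mkProj σ T h) = Nat.card {d : Quotient σ // ∃ i ∈ T, Quotient.mk σ i = d} := by
  set α := mkProj σ T h with hα
  let φ : Quotient σ → Quotient α :=
    Quotient.lift (fun i => Quotient.mk α (Sum.inl i))
      (fun a b hab => Quotient.sound (hab : projRel σ T (Sum.inl a) (Sum.inl b)))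
  have hφinj : Function.Injective φ := by
    intro d1 d2 hd
    induction d1 using Quotient.inductionOn with | h a =>
    induction d2 using Quotient.inductionOn with | h b =>
    have hd' : Quotient.mk α (Sum.inl a) = Quotient.mk α (Sum.inl b) := hd
    have hab : α.r (Sum.inl a) (Sum.inl b) := Quotient.exact hd'
    have hab' : σ.r a b := hab
    exact Quotient.sound hab' 
  let m : {d : Quotient σ // ∃ i ∈ T, Quotient.mk σ i = d} →
      {c : Quotient α //
        (∃ i : Fin n, Quotient.mk α (Sum.inl i) = c) ∧
        (∃ j : Fin n, Quotient.mk α (Sum.inr j) = c)} := fun p =>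
    ⟨φ p.1, by
      obtain ⟨d, i, hi, rfl⟩ := p
      refine ⟨⟨i, rfl⟩, ⟨i, Quotient.sound ?_⟩⟩
      exact (⟨σ.refl i, hi⟩ : projRel σ T (Sum.inr i) (Sum.inl i))⟩
  have hm : Function.Bijective m := by
    constructor
    · intro p q hpq
      exact Subtype.ext (hφinj (congrArg Subtype.val hpq))
    · rintro ⟨c, ⟨i, hi⟩, ⟨j, hj⟩⟩
      have hrel : α.r (Sum.inl i) (Sum.inr j) := Quotient.exact (hi.trans hj.symm)
      have hiT : i ∈ T := (hrel : projRel σ T (Sum.inl i) (Sum.inr j)).2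
      exact ⟨⟨Quotient.mk σ i, ⟨i, hiT, rfl⟩⟩, Subtype.ext hi⟩
  unfold rank
  exact (Nat.card_congr (Equiv.ofBijective m hm)).symm

lemma sat_finset (σ : Setoid (Fin n)) (s : Finset (Quotient σ)) :
    Sat σ {i | Quotient.mk σ i ∈ s} := by
  intro i j hij hi
  have : Quotient.mk σ i = Quotient.mk σ j := Quotient.sound hij
  simpa [← this] using hi

lemma rank_mkProj_finset (σ : Setoid (Fin n)) (s : Finset (Quotient σ)) :
    rank (mkProj σ {i | Quotient.mk σ i ∈ s} (sat_finset σ s)) = s.card := by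
  rw [rank_mkProj]
  have e : {d : Quotient σ // ∃ i ∈ {i | Quotient.mk σ i ∈ s}, Quotient.mk σ i = d} ≃
      {d : Quotient σ // d ∈ s} := by
    apply Equiv.subtypeEquivRight
    intro d
    constructor
    · rintro ⟨i, hi, rfl⟩; exact hi
    · intro hd
      induction d using Quotient.inductionOn with | h a =>
      exact ⟨a, hd, rfl⟩
  rw [Nat.card_congr e, Nat.card_eq_fintype_card, Fintype.card_coe]

/-- The parametrization of projections of rank at most 2. -/
noncomputable def back3 : ((σ : Setoid (Fin n)) × {s : Finset (Quotient σ) // s.card ≤ 2}) →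
    {α : PD n // IsProjection α ∧ rank α ≤ 2} := fun p =>
  ⟨mkProj p.1 {i | Quotient.mk p.1 i ∈ p.2.1} (sat_finset p.1 p.2.1),
    isProjection_mkProj _ _ _, by rw [rank_mkProj_finset]; exact p.2.2⟩

lemma back3_bijective : Function.Bijective (back3 (n := n)) := by
  constructor
  · rintro ⟨σ₁, s₁, hs₁⟩ ⟨σ₂, s₂, hs₂⟩ h
    have hEq := congrArg Subtype.val h
    simp only [back3] at hEq
    have hr : ∀ x y : V n, projRel σ₁ {i | Quotient.mk σ₁ i ∈ s₁} x y ↔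
        projRel σ₂ {i | Quotient.mk σ₂ i ∈ s₂} x y := by
      intro x y
      have : (mkProj σ₁ _ (sat_finset σ₁ s₁)).r x y ↔
          (mkProj σ₂ _ (sat_finset σ₂ s₂)).r x y := by rw [hEq]
      exact this
    have hσ : σ₁ = σ₂ := Setoid.ext fun i j => hr (Sum.inl i) (Sum.inl j)
    subst hσ
    have hs : s₁ = s₂ := by
      ext d
      induction d using Quotient.inductionOn with | h a =>
      have := hr (Sum.inl a) (Sum.inr a)
      constructor
      · intro hd; exact (this.mp ⟨σ₁.refl a, hd⟩).2
      · intro hd; exact (this.mpr ⟨σ₁.refl a, hd⟩).2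
    subst hs
    rfl
  · rintro ⟨α, hp, hr⟩
    set σ := uSet α
    set T := tSet α
    have hsat : Sat σ T := sat_of_proj α hp
    have hαeq : α = mkProj σ T hsat := proj_eq_mkProj α hp
    set s : Finset (Quotient σ) :=
      Finset.univ.filter (fun d => ∃ i ∈ T, Quotient.mk σ i = d) with hs
    have hT : {i | Quotient.mk σ i ∈ s} = T := by
      ext i
      simp only [hs, Set.mem_setOf_eq, Finset.mem_filter, Finset.mem_univ, true_and]
      constructor
      · rintro ⟨i', hi', he⟩
        exact hsat i' i (Quotient.exact he) hi'
      · intro hi; exact ⟨i, hi, rfl⟩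
    have hcard : s.card = rank α := by
      rw [hαeq, rank_mkProj]
      have e : {d : Quotient σ // ∃ i ∈ T, Quotient.mk σ i = d} ≃ {d : Quotient σ // d ∈ s} := by
        apply Equiv.subtypeEquivRight
        intro d
        simp [hs]
      rw [Nat.card_congr e, Nat.card_eq_fintype_card, Fintype.card_coe]
    refine ⟨⟨σ, s, by rw [hcard]; exact hr⟩, ?_⟩
    apply Subtype.ext
    simp only [back3]
    have : mkProj σ {i | Quotient.mk σ i ∈ s} (sat_finset σ s) = mkProj σ T hsat := by
      apply Setoid.ext
      intro x y
      rw [mkProj_r, mkProj_r, hT]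
    rw [this, ← hαeq]


def extRel (σ : Setoid (Fin n)) (o : Option (Quotient σ)) :
    Option (Fin n) → Option (Fin n) → Prop
  | some i, some j => σ.r i j
  | some i, none => o = some (Quotient.mk σ i)
  | none, some j => o = some (Quotient.mk σ j)
  | none, none => True

def extSetoid (σ : Setoid (Fin n)) (o : Option (Quotient σ)) : Setoid (Option (Fin n)) where
  r := extRel σ o
  iseqv := by
    constructor
    · rintro (_ | i)
      · trivial
      · exact σ.refl i
    · rintro (_ | i) (_ | j) h
      · trivial
      · exact h
      · exact h
      · exact σ.symm h
    · rintro (_ | i) (_ | j) (_ | k) h1 h2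
      · trivial
      · exact h2
      · trivial
      · exact h1.trans (congrArg some (Quotient.sound h2))
      · exact h1
      · exact Quotient.exact (Option.some_inj.mp (h1.symm.trans h2))
      · exact h2.trans (congrArg some (Quotient.sound (σ.symm h1)))
      · exact σ.trans h1 h2

/-- Second component for the classification of setoids on `Option (Fin n)`. -/
noncomputable def optPart (τ : Setoid (Option (Fin n))) : Option (Quotient (Setoid.comap some τ)) :=
  if h : ∃ i : Fin n, τ.r (some i) none then
    some (Quotient.mk (Setoid.comap some τ) h.choose)
  else none

noncomputable def backE1 : ((σ : Setoid (Fin n)) × Option (Quotient σ)) →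
    Setoid (Option (Fin n)) := fun p => extSetoid p.1 p.2

lemma backE1_bijective : Function.Bijective (backE1 (n := n)) := by
  constructor
  · rintro ⟨σ₁, o₁⟩ ⟨σ₂, o₂⟩ h
    simp only [backE1] at h
    have hr : ∀ x y : Option (Fin n), extRel σ₁ o₁ x y ↔ extRel σ₂ o₂ x y := by
      intro x y
      have : (extSetoid σ₁ o₁).r x y ↔ (extSetoid σ₂ o₂).r x y := by rw [h]
      exact this
    have hσ : σ₁ = σ₂ := Setoid.ext fun i j => hr (some i) (some j)
    subst hσ
    have ho : o₁ = o₂ := by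
      rcases ho1 : o₁ with _ | c
      · rcases ho2 : o₂ with _ | c
        · rfl
        · induction c using Quotient.inductionOn with | h a =>
          have : extRel σ₁ o₂ (some a) none := by rw [ho2]; exact rfl
          rw [← hr] at this
          rw [ho1] at this
          exact absurd this (by simp [extRel])
      · induction c using Quotient.inductionOn with | h a =>
        have h1 : extRel σ₁ o₁ (some a) none := by rw [ho1]; exact rfl
        rw [hr] at h1
        have h2 : o₂ = some (Quotient.mk σ₁ a) := h1
        rw [h2]
    rw [ho]
  · intro τ
    refine ⟨⟨Setoid.comap some τ, optPart τ⟩, ?_⟩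
    set σ := Setoid.comap some τ with hσ
    apply Setoid.ext
    have key : ∀ i : Fin n, extRel σ (optPart τ) (some i) none ↔ τ.r (some i) none := by
      intro i
      unfold optPart
      by_cases h : ∃ i : Fin n, τ.r (some i) none
      · rw [dif_pos h]
        have hc := h.choose_spec
        constructor
        · intro he
          have : σ.r h.choose i := Quotient.exact (Option.some_inj.mp he)
          exact τ.trans (τ.symm this) hc
        · intro hi
          have : σ.r h.choose i := τ.trans hc (τ.symm hi)
          exact congrArg some (Quotient.sound this)
      · rw [dif_neg h]
        simp only [extRel]
        constructor
        · intro he; exact absurd he (by simp)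
        · intro hi; exact absurd ⟨i, hi⟩ h
    rintro (_ | i) (_ | j)
    · show extRel σ (optPart τ) none none ↔ τ.r none none
      exact ⟨fun _ => τ.refl none, fun _ => trivial⟩
    · show extRel σ (optPart τ) none (some j) ↔ τ.r none (some j)
      rw [show extRel σ (optPart τ) none (some j) = extRel σ (optPart τ) (some j) none from rfl]
      rw [key j]
      exact ⟨fun h => τ.symm h, fun h => τ.symm h⟩
    · exact key i
    · exact Iff.rfl

lemma card_quot_ext_some (σ : Setoid (Fin n)) (c : Quotient σ) :
    Nat.card (Quotient (extSetoid σ (some c))) = Nat.card (Quotient σ) := by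
  apply Nat.card_congr
  refine ⟨Quotient.lift (fun x : Option (Fin n) => x.elim c (fun i => Quotient.mk σ i)) ?_,
    Quotient.lift (fun i => Quotient.mk (extSetoid σ (some c)) (some i)) ?_, ?_, ?_⟩
  · rintro (_ | i) (_ | j) hxy
    · rfl
    · show c = Quotient.mk σ j
      exact Option.some_inj.mp (hxy : some c = some (Quotient.mk σ j))
    · show Quotient.mk σ i = c
      exact (Option.some_inj.mp (hxy : some c = some (Quotient.mk σ i))).symm
    · exact Quotient.sound (hxy : σ.r i j)
  · intro a b hab
    exact Quotient.sound (hab : σ.r a b)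
  · intro x
    induction x using Quotient.inductionOn with | h y =>
    rcases y with _ | i
    · induction c using Quotient.inductionOn with | h a =>
      exact Quotient.sound ((rfl : (some (Quotient.mk σ a) : Option (Quotient σ)) = _) :
        extRel σ (some (Quotient.mk σ a)) (some a) none)
    · rfl
  · intro d
    induction d using Quotient.inductionOn with | h a =>
    rfl

lemma card_quot_ext_none (σ : Setoid (Fin n)) :
    Nat.card (Quotient (extSetoid σ (none : Option (Quotient σ))))
      = Nat.card (Quotient σ) + 1 := by
  have e : Quotient (extSetoid σ (none : Option (Quotient σ))) ≃ Option (Quotient σ) := by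
    refine ⟨Quotient.lift (fun x : Option (Fin n) => x.map (fun i => Quotient.mk σ i)) ?_,
      fun o => o.elim (Quotient.mk (extSetoid σ none) none)
        (Quotient.lift (fun i => Quotient.mk (extSetoid σ none) (some i))
          (fun a b hab => Quotient.sound (hab : extRel σ none (some a) (some b)))), ?_, ?_⟩
    · rintro (_ | i) (_ | j) hxy
      · rfl
      · exact absurd (hxy : (none : Option (Quotient σ)) = some (Quotient.mk σ j))
          (Ne.symm (Option.some_ne_none _))
      · exact absurd (hxy : (none : Option (Quotient σ)) = some (Quotient.mk σ i))
          (Ne.symm (Option.some_ne_none _))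
      · exact congrArg some (Quotient.sound (hxy : σ.r i j))
    · intro x
      induction x using Quotient.inductionOn with | h y =>
      rcases y with _ | i
      · rfl
      · rfl
    · rintro (_ | d)
      · rfl
      · induction d using Quotient.inductionOn with | h a =>
        rfl
  rw [Nat.card_congr e, Nat.card_eq_fintype_card, Nat.card_eq_fintype_card, Fintype.card_option]

def setoidCongr {X Y : Type*} (e : X ≃ Y) : Setoid X ≃ Setoid Y where
  toFun := Setoid.comap e.symm
  invFun := Setoid.comap e
  left_inv := fun σ => Setoid.ext fun a b => by
    show σ (e.symm (e a)) (e.symm (e b)) ↔ σ a b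
    simp
  right_inv := fun σ => Setoid.ext fun a b => by
    show σ (e (e.symm a)) (e (e.symm b)) ↔ σ a b
    simp

lemma card_quot_comap {X Y : Type*} (e : X ≃ Y) (σ : Setoid Y) :
    Nat.card (Quotient (Setoid.comap (⇑e) σ)) = Nat.card (Quotient σ) :=
  Nat.card_congr (Quotient.congr e (fun _ _ => Iff.rfl))


lemma count_le_two (Q : Type*) [Fintype Q] :
    Nat.card {s : Finset Q // s.card ≤ 2}
      = 1 + Fintype.card Q + (Fintype.card Q).choose 2 := by
  rw [Nat.card_eq_fintype_card, Fintype.card_subtype]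
  have h1 : (Finset.univ.filter (fun s : Finset Q => s.card ≤ 2))
      = Finset.univ.filter (fun s : Finset Q => s.card = 0)
        ∪ Finset.univ.filter (fun s : Finset Q => s.card = 1)
        ∪ Finset.univ.filter (fun s : Finset Q => s.card = 2) := by
    rw [← Finset.filter_or, ← Finset.filter_or]
    apply Finset.filter_congr
    intro s _
    constructor
    · intro h; omega
    · intro h; omega
  have hk : ∀ k : ℕ, (Finset.univ.filter (fun s : Finset Q => s.card = k)).card
      = (Fintype.card Q).choose k := by
    intro k
    rw [← Finset.powerset_univ, ← Finset.powersetCard_eq_filter,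
      Finset.card_powersetCard, Finset.card_univ]
  rw [h1, Finset.card_union_of_disjoint, Finset.card_union_of_disjoint]
  · rw [hk, hk, hk]; simp
  · rw [Finset.disjoint_filter]; intro s _ h; omega
  · rw [Finset.disjoint_union_left]
    constructor <;> (rw [Finset.disjoint_filter]; intro s _ h; omega)

lemma two_mul_choose_two (q : ℕ) : 2 * q.choose 2 + q = q * q := by
  induction q with
  | zero => rfl
  | succ q ih =>
    rw [Nat.choose_succ_succ, Nat.choose_one_right]
    nlinarith [ih]

lemma count_le_two' (Q : Type*) [Finite Q] :
    Nat.card {s : Finset Q // s.card ≤ 2}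
      = 1 + Nat.card Q + (Nat.card Q).choose 2 := by
  letI : Fintype Q := Fintype.ofFinite _
  rw [Nat.card_eq_fintype_card (α := Q), count_le_two Q]

lemma nat_card_sigma {ι : Type*} [Fintype ι] (f : ι → Type*) [∀ i, Finite (f i)] :
    Nat.card ((i : ι) × f i) = ∑ i, Nat.card (f i) := by
  letI : ∀ i, Fintype (f i) := fun i => Fintype.ofFinite _
  rw [Nat.card_eq_fintype_card, Fintype.card_sigma]
  exact Finset.sum_congr rfl fun i _ => (Nat.card_eq_fintype_card).symm

lemma nat_card_option (X : Type*) [Finite X] : Nat.card (Option X) = Nat.card X + 1 := by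
  letI : Fintype X := Fintype.ofFinite _
  rw [Nat.card_eq_fintype_card, Nat.card_eq_fintype_card, Fintype.card_option]

lemma card_proj_le_two :
    Nat.card {α : PD n // IsProjection α ∧ rank α ≤ 2}
      = ∑ σ : Setoid (Fin n),
          (1 + Nat.card (Quotient σ) + (Nat.card (Quotient σ)).choose 2) := by
  rw [← Nat.card_congr (Equiv.ofBijective (back3 (n := n)) back3_bijective)]
  rw [nat_card_sigma]
  exact Finset.sum_congr rfl fun σ _ => count_le_two' _

lemma bell_succ (k : ℕ) :
    bell (k + 1) = ∑ σ : Setoid (Fin k), (Nat.card (Quotient σ) + 1) := by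
  unfold bell
  rw [Nat.card_congr ((setoidCongr (finSuccEquiv k)).trans
    (Equiv.ofBijective (backE1 (n := k)) backE1_bijective).symm)]
  rw [nat_card_sigma]
  exact Finset.sum_congr rfl fun σ _ => nat_card_option _

lemma bell_two (n : ℕ) :
    bell (n + 2) = ∑ σ : Setoid (Fin n),
      (Nat.card (Quotient σ) + 2
        + Nat.card (Quotient σ) * (Nat.card (Quotient σ) + 1)) := by
  rw [show n + 2 = (n + 1) + 1 from rfl, bell_succ (n + 1)]
  let e : ((σ : Setoid (Fin n)) × Option (Quotient σ)) ≃ Setoid (Fin (n + 1)) :=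
    (Equiv.ofBijective (backE1 (n := n)) backE1_bijective).trans
      (setoidCongr (finSuccEquiv n)).symm
  rw [← Fintype.sum_equiv e (fun p => Nat.card (Quotient (e p)) + 1)
    (fun τ => Nat.card (Quotient τ) + 1) (fun p => rfl)]
  have hc : ∀ (σ : Setoid (Fin n)) (o : Option (Quotient σ)),
      Nat.card (Quotient (e ⟨σ, o⟩)) = Nat.card (Quotient (extSetoid σ o)) :=
    fun σ o => card_quot_comap (finSuccEquiv n) (extSetoid σ o)
  rw [← Finset.univ_sigma_univ, Finset.sum_sigma]
  apply Finset.sum_congr rfl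
  intro σ _
  rw [Fintype.sum_option]
  simp only [hc, card_quot_ext_none, card_quot_ext_some]
  rw [Finset.sum_const, Finset.card_univ, smul_eq_mul,
    ← Nat.card_eq_fintype_card (α := Quotient σ)]

theorem statement15' (n : ℕ) :
    2 * Nat.card {α : PD n // IsProjection α ∧ rank α ≤ 2} + bell (n + 1)
      = bell (n + 2) + bell n := by
  have h3 : bell n = ∑ _σ : Setoid (Fin n), 1 := by
    unfold bell
    rw [Nat.card_eq_fintype_card]
    simp
  rw [card_proj_le_two, bell_succ n, bell_two n, h3]
  rw [Finset.mul_sum, ← Finset.sum_add_distrib, ← Finset.sum_add_distrib]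
  apply Finset.sum_congr rfl
  intro σ _
  have h := two_mul_choose_two (Nat.card (Quotient σ))
  set q := Nat.card (Quotient σ) with hq
  rw [Nat.mul_succ]
  generalize q * q = a at h ⊢
  omega

/-- For `n ≥ 0`, the number of projections of the partition monoid `𝒫_n`
of rank at most `2` equals `(B(n+2) − B(n+1) + B(n))/2`, where `B` is the Bell sequence.
(Stated without subtraction/division: `2|Q| + B(n+1) = B(n+2) + B(n)`.) -/
theorem statement15 (n : ℕ) :
    2 * Nat.card {α : PD n // IsProjection α ∧ rank α ≤ 2} + bell (n + 1)
      = bell (n + 2) + bell n := statement15' n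

end DiagramDeg
end

section
/- Let n ≥ 0 and let TL_n be the Temperley–Lieb monoid, and C(k) the k-th Catalan number. If n = 2k−1 is odd, then the number of projections of TL_n of rank 1 or 3 equals C(k+1) − C(k). If n = 2k is even, then the number of projections of TL_n of rank 0, 2 or 4 equals C(k+2) − 2C(k+1) + C(k). -/
namespace DiagramDeg

/-- matching condition: involution supported on `[0,n)`, noncrossing, exposed fixed pts -/
def MC (n : ℕ) (p : ℕ → ℕ) : Prop :=
  (∀ i, p (p i) = i) ∧ (∀ i, n ≤ i → p i = i) ∧
  (∀ a b, a < b → b < p a → p b < p a) ∧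
  (∀ a i, a < i → i < p a → p i ≠ i)

theorem MC.lt {n : ℕ} {p : ℕ → ℕ} (h : MC n p) {i : ℕ} (hi : i < n) : p i < n := by
  by_contra hge
  have h1 : p (p i) = p i := h.2.1 _ (le_of_not_gt hge)
  rw [h.1] at h1
  omega

theorem MC.nest {n : ℕ} {p : ℕ → ℕ} (h : MC n p) {a b : ℕ} (hab : a < b) (hb : b < p a) :
    a < p b := by
  by_contra hle
  push_neg at hle
  have h1 : p b < p a := h.2.2.1 a b hab hb
  have hne : p b ≠ a := by
    intro he
    have := congrArg p he
    rw [h.1] at this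
    omega
  have h2 : p a < p (p b) := h.2.2.1 (p b) a (by omega) (by rw [h.1]; omega)
  rw [h.1] at h2
  omega

theorem MC.inj {n : ℕ} {p : ℕ → ℕ} (h : MC n p) {i j : ℕ} (he : p i = p j) : i = j := by
  have := congrArg p he
  rwa [h.1, h.1] at this

def fc (p : ℕ → ℕ) (n : ℕ) : ℕ := ((Finset.range n).filter fun i => p i = i).card

theorem MC.finite (n : ℕ) (Q : (ℕ → ℕ) → Prop) : Finite {p : ℕ → ℕ // MC n p ∧ Q p} := by
  apply Finite.of_injective (fun q => (fun i => (⟨q.1 i.1, q.2.1.lt i.2⟩ : Fin n) : Fin n → Fin n))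
  intro q q' he
  ext1
  funext i
  rcases lt_or_ge i n with hi | hi
  · have := congrFun he ⟨i, hi⟩
    simpa [Fin.ext_iff] using this
  · rw [q.2.1.2.1 i hi, q'.2.1.2.1 i hi]

noncomputable def P (n r : ℕ) : ℕ := Nat.card {p : ℕ → ℕ // MC n p ∧ fc p n = r}

theorem P_zero (r : ℕ) : P 0 r = if r = 0 then 1 else 0 := by
  have hid : ∀ p : ℕ → ℕ, MC 0 p ↔ p = id := by
    intro p
    constructor
    · intro h; funext i; exact h.2.1 i (Nat.zero_le i)
    · rintro rfl
      refine ⟨fun i => rfl, fun i _ => rfl, fun a b h1 h2 => ?_, fun a i h1 h2 => ?_⟩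
      · simp only [id] at *; omega
      · simp only [id] at *; omega
  unfold P
  split_ifs with hr
  · subst hr
    rw [Nat.card_eq_one_iff_unique]
    constructor
    · constructor
      rintro ⟨p, hp, _⟩ ⟨q, hq, _⟩
      simp only [Subtype.mk_eq_mk]
      rw [(hid p).1 hp, (hid q).1 hq]
    · exact ⟨⟨id, (hid id).2 rfl, by simp [fc]⟩⟩
  · rw [Nat.card_eq_zero]
    left
    constructor
    rintro ⟨p, hp, hfc⟩
    rw [(hid p).1 hp] at hfc
    simp [fc] at hfc
    omega



/-- delete the point `n` (right endpoint of an arc to `a`), freeing `a` -/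
def dnF (n a : ℕ) (p : ℕ → ℕ) : ℕ → ℕ := fun i => if i = a then a else if i = n then n else p i

/-- attach a new point `n` to the free point `a` -/
def upF (n a : ℕ) (q : ℕ → ℕ) : ℕ → ℕ := fun i => if i = a then n else if i = n then a else q i

theorem dnF_at_a {n a : ℕ} {p : ℕ → ℕ} : dnF n a p a = a := if_pos rfl
theorem dnF_at_n {n a : ℕ} {p : ℕ → ℕ} (h : n ≠ a) : dnF n a p n = n := by
  unfold dnF; rw [if_neg h, if_pos rfl]
theorem dnF_other {n a i : ℕ} {p : ℕ → ℕ} (h1 : i ≠ a) (h2 : i ≠ n) : dnF n a p i = p i := by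
  unfold dnF; rw [if_neg h1, if_neg h2]
theorem upF_at_a {n a : ℕ} {q : ℕ → ℕ} : upF n a q a = n := if_pos rfl
theorem upF_at_n {n a : ℕ} {q : ℕ → ℕ} (h : n ≠ a) : upF n a q n = a := by
  unfold upF; rw [if_neg h, if_pos rfl]
theorem upF_other {n a i : ℕ} {q : ℕ → ℕ} (h1 : i ≠ a) (h2 : i ≠ n) : upF n a q i = q i := by
  unfold upF; rw [if_neg h1, if_neg h2]

theorem dn_spec {n a : ℕ} {p : ℕ → ℕ} (hp : MC (n + 1) p) (hne : p n ≠ n) (hadef : p n = a) :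
    MC n (dnF n a p) ∧ a < n ∧ dnF n a p a = a ∧
      (∀ i, i < n → dnF n a p i = i → i ≤ a) ∧ fc (dnF n a p) n = fc p (n + 1) + 1 := by
  have ha : a < n := by have := hp.lt (show n < n + 1 by omega); omega
  have hpa : p a = n := by rw [← hadef, hp.1]
  have han : n ≠ a := by omega
  have hback : ∀ i, p i = n → i = a := by
    intro i he
    have h := congrArg p he
    rw [hp.1, hadef] at h; exact h
  have hbacka : ∀ i, p i = a → i = n := by
    intro i he
    have h := congrArg p he
    rw [hp.1, hpa] at h; exact h
  have hplt : ∀ i, i < n → i ≠ a → p i < n := by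
    intro i h1 h2
    have h3 : p i < n + 1 := hp.lt (by omega)
    have h4 : p i ≠ n := fun he => h2 (hback i he)
    omega
  have hple : ∀ x y, x < y → y < p x → x ≠ a → x ≠ n → p x ≠ n ∧ p x < n + 1 := by
    intro x y hxy hyx h1 h2
    have h3 : x < n + 1 := by
      by_contra h
      rw [hp.2.1 x (by omega)] at hyx; omega
    exact ⟨fun he => h1 (hback x he), hp.lt h3⟩
  have hmc : MC n (dnF n a p) := by
    refine ⟨?_, ?_, ?_, ?_⟩
    · intro i
      rcases eq_or_ne i a with he | h1
      · rw [he, dnF_at_a, dnF_at_a]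
      rcases eq_or_ne i n with he | h2
      · rw [he, dnF_at_n han, dnF_at_n han]
      rw [dnF_other h1 h2]
      have h3 : p i ≠ a := fun he => h2 (hbacka i he)
      have h4 : p i ≠ n := fun he => h1 (hback i he)
      rw [dnF_other h3 h4, hp.1]
    · intro i hi
      rcases eq_or_ne i n with he | h2
      · rw [he]; exact dnF_at_n han
      · rw [dnF_other (by omega) h2]; exact hp.2.1 i (by omega)
    · intro x y hxy hyx
      have hx1 : x ≠ a := by intro he; rw [he, dnF_at_a] at hyx; omega
      have hx2 : x ≠ n := by intro he; rw [he, dnF_at_n han] at hyx; omega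
      rw [dnF_other hx1 hx2] at hyx ⊢
      obtain ⟨hxn, hxlt⟩ := hple x y hxy hyx hx1 hx2
      rcases eq_or_ne y a with he | hy1
      · have h5 := hp.2.2.1 x a (by omega) (by omega)
        omega
      have hy2 : y ≠ n := by omega
      rw [dnF_other hy1 hy2]
      exact hp.2.2.1 x y hxy hyx
    · intro x i hxi hix hfix
      have hx1 : x ≠ a := by intro he; rw [he, dnF_at_a] at hix; omega
      have hx2 : x ≠ n := by intro he; rw [he, dnF_at_n han] at hix; omega
      rw [dnF_other hx1 hx2] at hix
      obtain ⟨hxn, hxlt⟩ := hple x i hxi hix hx1 hx2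
      rcases eq_or_ne i a with he | hi1
      · have := hp.2.2.1 x a (by omega) (by omega); omega
      have hi2 : i ≠ n := by omega
      rw [dnF_other hi1 hi2] at hfix
      exact hp.2.2.2 x i hxi hix hfix
  refine ⟨hmc, ha, dnF_at_a, ?_, ?_⟩
  · intro i hi hfix
    by_contra hgt
    push_neg at hgt
    rcases eq_or_ne i a with he | h1
    · omega
    rw [dnF_other h1 (by omega)] at hfix
    exact hp.2.2.2 a i hgt (by omega) hfix
  · have hset : (Finset.range n).filter (fun i => dnF n a p i = i)
        = insert a ((Finset.range (n+1)).filter (fun i => p i = i)) := by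
      ext i
      simp only [Finset.mem_filter, Finset.mem_range, Finset.mem_insert]
      constructor
      · rintro ⟨h1, h2⟩
        rcases eq_or_ne i a with he | h3
        · left; exact he
        · right
          rw [dnF_other h3 (by omega)] at h2
          exact ⟨by omega, h2⟩
      · rintro (he | ⟨h1, h2⟩)
        · rw [he]; exact ⟨ha, dnF_at_a⟩
        · have h3 : i ≠ a := by intro he; rw [he, hpa] at h2; omega
          have h4 : i ≠ n := by intro he; rw [he, hadef] at h2; omega
          refine ⟨by omega, by rw [dnF_other h3 h4]; exact h2⟩
    have hnotmem : a ∉ (Finset.range (n+1)).filter (fun i => p i = i) := by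
      simp only [Finset.mem_filter, Finset.mem_range, not_and]
      intro _ h2
      rw [hpa] at h2; omega
    rw [fc, hset, Finset.card_insert_of_notMem hnotmem, fc]

theorem up_spec {n a : ℕ} {q : ℕ → ℕ} (hq : MC n q) (ha : a < n) (hfix : q a = a)
    (hmax : ∀ i, i < n → q i = i → i ≤ a) :
    MC (n + 1) (upF n a q) ∧ upF n a q n = a ∧ fc (upF n a q) (n + 1) + 1 = fc q n := by
  have han : n ≠ a := by omega
  have hback : ∀ i, q i = a → i = a := by
    intro i he
    have h := congrArg q he
    rw [hq.1, hfix] at h; omega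
  have hmc : MC (n+1) (upF n a q) := by
    refine ⟨?_, ?_, ?_, ?_⟩
    · intro i
      rcases eq_or_ne i a with he | h1
      · rw [he, upF_at_a, upF_at_n han]
      rcases eq_or_ne i n with he | h2
      · rw [he, upF_at_n han, upF_at_a]
      rw [upF_other h1 h2]
      have h3 : q i ≠ a := fun he => h1 (hback i he)
      have h4 : q i ≠ n := by
        rcases lt_or_ge i n with h | h
        · have := hq.lt h; omega
        · rw [hq.2.1 i h]; omega
      rw [upF_other h3 h4, hq.1]
    · intro i hi
      rw [upF_other (by omega) (by omega)]; exact hq.2.1 i (by omega)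
    · intro x y hxy hyx
      rcases eq_or_ne x a with he | hx1
      · rw [he, upF_at_a] at hyx
        have hy1 : y ≠ a := by omega
        have hy2 : y ≠ n := by omega
        rw [he, upF_at_a, upF_other hy1 hy2]
        have := hq.lt (show y < n by omega)
        omega
      rcases eq_or_ne x n with he | hx2
      · rw [he, upF_at_n han] at hyx; omega
      rw [upF_other hx1 hx2] at hyx ⊢
      have hxlt : x < n := by
        by_contra h
        rw [hq.2.1 x (by omega)] at hyx; omega
      have hqx : q x < n := hq.lt hxlt
      rcases eq_or_ne y a with he | hy1
      · exact absurd (by rw [he]; exact hfix : q y = y) (hq.2.2.2 x y hxy hyx)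
      have hy2 : y ≠ n := by omega
      rw [upF_other hy1 hy2]
      exact hq.2.2.1 x y hxy hyx
    · intro x i hxi hix hfx
      have hi1 : i ≠ a := by intro he; rw [he, upF_at_a] at hfx; omega
      have hi2 : i ≠ n := by intro he; rw [he, upF_at_n han] at hfx; omega
      rw [upF_other hi1 hi2] at hfx
      rcases eq_or_ne x a with he | hx1
      · rw [he, upF_at_a] at hix
        have := hmax i (by omega) hfx
        omega
      rcases eq_or_ne x n with he | hx2
      · rw [he, upF_at_n han] at hix; omega
      rw [upF_other hx1 hx2] at hix
      have hxlt : x < n := by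
        by_contra h
        rw [hq.2.1 x (by omega)] at hix; omega
      exact hq.2.2.2 x i hxi hix hfx
  refine ⟨hmc, upF_at_n han, ?_⟩
  have hmem : a ∈ (Finset.range n).filter (fun i => q i = i) := by
    simp only [Finset.mem_filter, Finset.mem_range]; exact ⟨ha, hfix⟩
  have hset : (Finset.range (n+1)).filter (fun i => upF n a q i = i)
      = ((Finset.range n).filter (fun i => q i = i)).erase a := by
    ext i
    simp only [Finset.mem_filter, Finset.mem_range, Finset.mem_erase]
    constructor
    · rintro ⟨h1, h2⟩
      have h3 : i ≠ a := by intro he; rw [he, upF_at_a] at h2; omega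
      have h4 : i ≠ n := by intro he; rw [he, upF_at_n han] at h2; omega
      rw [upF_other h3 h4] at h2
      exact ⟨h3, by omega, h2⟩
    · rintro ⟨h3, h1, h2⟩
      exact ⟨by omega, by rw [upF_other h3 (by omega)]; exact h2⟩
  have hcard : 0 < ((Finset.range n).filter (fun i => q i = i)).card :=
    Finset.card_pos.mpr ⟨a, hmem⟩
  rw [fc, hset, Finset.card_erase_of_mem hmem, fc]
  omega

theorem up_dn {n a : ℕ} {p : ℕ → ℕ} (hp : MC (n + 1) p) (hne : p n ≠ n) (hadef : p n = a) :
    upF n a (dnF n a p) = p := by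
  have ha : a < n := by have := hp.lt (show n < n + 1 by omega); omega
  have hpa : p a = n := by rw [← hadef, hp.1]
  funext i
  rcases eq_or_ne i a with he | h1
  · rw [he, upF_at_a, hpa]
  rcases eq_or_ne i n with he | h2
  · rw [he, upF_at_n (by omega), hadef]
  · rw [upF_other h1 h2, dnF_other h1 h2]

theorem dn_up {n a : ℕ} {q : ℕ → ℕ} (hq : MC n q) (ha : a < n) (hfix : q a = a) :
    dnF n a (upF n a q) = q := by
  funext i
  rcases eq_or_ne i a with he | h1
  · rw [he, dnF_at_a, hfix]
  rcases eq_or_ne i n with he | h2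
  · rw [he, dnF_at_n (by omega), hq.2.1 n le_rfl]
  · rw [dnF_other h1 h2, upF_other h1 h2]

theorem MC.restrict {n : ℕ} {p : ℕ → ℕ} (hp : MC (n + 1) p) (h : p n = n) : MC n p :=
  ⟨hp.1, fun i hi => by
    rcases eq_or_ne i n with he | hne
    · rw [he]; exact h
    · exact hp.2.1 i (by omega), hp.2.2.1, hp.2.2.2⟩

theorem MC.ext {n : ℕ} {q : ℕ → ℕ} (hq : MC n q) : MC (n + 1) q :=
  ⟨hq.1, fun i hi => hq.2.1 i (by omega), hq.2.2.1, hq.2.2.2⟩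

theorem fc_succ_fix {n : ℕ} {p : ℕ → ℕ} (h : p n = n) : fc p (n + 1) = fc p n + 1 := by
  unfold fc
  rw [Finset.range_add_one, Finset.filter_insert, if_pos h, Finset.card_insert_of_notMem]
  simp

noncomputable def maxfix (n : ℕ) (q : ℕ → ℕ) : ℕ :=
  (((Finset.range n).filter fun i => q i = i).max).getD 0

theorem maxfix_spec {n : ℕ} {q : ℕ → ℕ}
    (h : (((Finset.range n).filter fun i => q i = i)).Nonempty) :
    maxfix n q < n ∧ q (maxfix n q) = maxfix n q ∧ ∀ i, i < n → q i = i → i ≤ maxfix n q := by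
  obtain ⟨m, hm⟩ := Finset.max_of_nonempty h
  have hval : maxfix n q = m := by rw [maxfix, hm]; rfl
  have hmem := Finset.mem_of_max hm
  simp only [Finset.mem_filter, Finset.mem_range] at hmem
  refine ⟨by rw [hval]; exact hmem.1, by rw [hval]; exact hmem.2, ?_⟩
  intro i hi hfix
  have : (i : ℕ) ∈ (Finset.range n).filter fun i => q i = i := by
    simp only [Finset.mem_filter, Finset.mem_range]; exact ⟨hi, hfix⟩
  have := Finset.le_max this
  rw [hm] at this
  rw [hval]
  exact_mod_cast this

theorem up_maxfix {n r : ℕ} {q : ℕ → ℕ} (hq : MC n q) (hfc : fc q n = r + 1) :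
    MC (n + 1) (upF n (maxfix n q) q) ∧ upF n (maxfix n q) q n = maxfix n q ∧
      maxfix n q < n ∧ q (maxfix n q) = maxfix n q ∧ fc (upF n (maxfix n q) q) (n + 1) = r := by
  have hne : (((Finset.range n).filter fun i => q i = i)).Nonempty := by
    rw [← Finset.card_pos]
    unfold fc at hfc
    omega
  obtain ⟨h1, h2, h3⟩ := maxfix_spec hne
  obtain ⟨hmc, hpn, hfc2⟩ := up_spec hq h1 h2 h3
  exact ⟨hmc, hpn, h1, h2, by omega⟩

theorem P_succ (n r : ℕ) :
    P (n + 1) r = Nat.card {q : ℕ → ℕ // MC n q ∧ fc q n + 1 = r} + P n (r + 1) := by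
  haveI := MC.finite n (fun q => fc q n + 1 = r)
  haveI := MC.finite n (fun q => fc q n = r + 1)
  haveI := MC.finite (n + 1) (fun p => fc p (n + 1) = r)
  rw [P, P, ← Nat.card_sum]
  refine (Nat.card_congr (Equiv.ofBijective ?_ ⟨?_, ?_⟩)).symm
  · exact Sum.elim
      (fun q => (⟨q.1, q.2.1.ext, by
        rw [fc_succ_fix (q.2.1.2.1 n le_rfl)]; omega⟩ :
          {p : ℕ → ℕ // MC (n + 1) p ∧ fc p (n + 1) = r}))
      (fun q => ⟨upF n (maxfix n q.1) q.1, (up_maxfix q.2.1 q.2.2).1,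
        (up_maxfix q.2.1 q.2.2).2.2.2.2⟩)
  · rintro (q | q) (q' | q') he <;>
      simp only [Sum.elim_inl, Sum.elim_inr] at he <;>
      have hval := congrArg Subtype.val he
    · replace hval : q.1 = q'.1 := hval
      exact congrArg Sum.inl (Subtype.ext hval)
    · exfalso
      have s2 := up_maxfix q'.2.1 q'.2.2
      replace hval : q.1 = upF n (maxfix n q'.1) q'.1 := hval
      have h1 := congrFun hval n
      rw [q.2.1.2.1 n le_rfl, upF_at_n (show n ≠ maxfix n q'.1 by
        have := s2.2.2.1; omega)] at h1
      have := s2.2.2.1; omega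
    · exfalso
      have s2 := up_maxfix q.2.1 q.2.2
      replace hval : upF n (maxfix n q.1) q.1 = q'.1 := hval
      have h1 := congrFun hval n
      rw [q'.2.1.2.1 n le_rfl, upF_at_n (show n ≠ maxfix n q.1 by
        have := s2.2.2.1; omega)] at h1
      have := s2.2.2.1; omega
    · have s1 := up_maxfix q.2.1 q.2.2
      have s2 := up_maxfix q'.2.1 q'.2.2
      replace hval : upF n (maxfix n q.1) q.1 = upF n (maxfix n q'.1) q'.1 := hval
      have h1 := congrFun hval n
      rw [upF_at_n (show n ≠ maxfix n q.1 by have := s1.2.2.1; omega),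
        upF_at_n (show n ≠ maxfix n q'.1 by have := s2.2.2.1; omega)] at h1
      have h2 : q.1 = q'.1 := by
        have e1 := dn_up q.2.1 s1.2.2.1 s1.2.2.2.1
        have e2 := dn_up q'.2.1 s2.2.2.1 s2.2.2.2.1
        rw [← e1, ← e2, hval, h1]
      exact congrArg Sum.inr (Subtype.ext h2)
  · intro p
    rcases eq_or_ne (p.1 n) n with h | h
    · refine ⟨Sum.inl ⟨p.1, p.2.1.restrict h, ?_⟩, Subtype.ext rfl⟩
      have := fc_succ_fix (p := p.1) h
      have := p.2.2
      omega
    · obtain ⟨hmcd, ha, hfa, hmax, hfcd⟩ := dn_spec p.2.1 h rfl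
      have hfcq : fc (dnF n (p.1 n) p.1) n = r + 1 := by
        have := p.2.2; omega
      refine ⟨Sum.inr ⟨dnF n (p.1 n) p.1, hmcd, hfcq⟩, Subtype.ext ?_⟩
      have smax := up_maxfix hmcd hfcq
      have hmx : maxfix n (dnF n (p.1 n) p.1) = p.1 n := by
        have h1 := hmax _ smax.2.2.1 smax.2.2.2.1
        have h2 := smax.2.2.1
        -- p.1 n is fixed in dnF and maxfix is max
        have hne2 : (((Finset.range n).filter fun i => dnF n (p.1 n) p.1 i = i)).Nonempty := by
          rw [← Finset.card_pos]
          unfold fc at hfcq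
          omega
        have h3 := (maxfix_spec hne2).2.2 (p.1 n) ha hfa
        omega
      simp only [Sum.elim_inr]
      rw [hmx, up_dn p.2.1 h rfl]

theorem P_succ' (n r : ℕ) : P (n + 1) (r + 1) = P n r + P n (r + 2) := by
  rw [P_succ]
  congr 1
  rw [P]
  exact Nat.card_congr (Equiv.subtypeEquivRight (fun q => by
    constructor
    · rintro ⟨h1, h2⟩; exact ⟨h1, by omega⟩
    · rintro ⟨h1, h2⟩; exact ⟨h1, by omega⟩))

theorem P_succ0 (n : ℕ) : P (n + 1) 0 = P n 1 := by
  rw [P_succ]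
  have : Nat.card {q : ℕ → ℕ // MC n q ∧ fc q n + 1 = 0} = 0 := by
    rw [Nat.card_eq_zero]
    left
    constructor
    rintro ⟨q, _, h⟩
    omega
  rw [this]
  norm_num

/-- ballot-number closed form -/
def B (n r : ℕ) : ℤ :=
  if r ≤ n ∧ (n + r) % 2 = 0 then
    ((n.choose ((n - r) / 2) : ℤ) - (n.choose ((n + r) / 2 + 1) : ℤ))
  else 0

theorem B_rec0 (n : ℕ) : B (n + 1) 0 = B n 1 := by
  obtain ⟨m, rfl | rfl⟩ := Nat.even_or_odd' n
  · rw [B, B, if_neg (by omega), if_neg (by omega)]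
  · rw [B, B, if_pos ⟨by omega, by omega⟩, if_pos ⟨by omega, by omega⟩]
    have e1 : (2 * m + 1 + 1 - 0) / 2 = m + 1 := by omega
    have e2 : (2 * m + 1 + 1 + 0) / 2 + 1 = m + 2 := by omega
    have e3 : (2 * m + 1 - 1) / 2 = m := by omega
    have e4 : (2 * m + 1 + 1) / 2 + 1 = m + 2 := by omega
    simp only [e1, e2, e3, e4]
    have p1 : (2 * m + 1 + 1).choose (m + 1) = (2 * m + 1).choose m + (2 * m + 1).choose (m + 1) :=
      Nat.choose_succ_succ _ _
    have p2 : (2 * m + 1 + 1).choose (m + 2)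
        = (2 * m + 1).choose (m + 1) + (2 * m + 1).choose (m + 2) := Nat.choose_succ_succ _ _
    have hz : (2 * m + 1).choose (m + 2) = (2 * m + 1 + 1).choose (m + 2) - (2 * m + 1).choose (m+1) := by omega
    push_cast [p1, p2]
    ring

theorem B_rec (n r : ℕ) : B (n + 1) (r + 1) = B n r + B n (r + 2) := by
  rcases le_or_gt r n with hr | hr
  · rcases Nat.eq_or_lt_of_le hr with he | hlt
    · -- r = n
      subst he
      rw [B, B, B, if_pos ⟨by omega, by omega⟩, if_pos ⟨by omega, by omega⟩, if_neg (by omega)]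
      have c1 : (r + 1).choose ((r + 1 - (r + 1)) / 2) = 1 := by
        rw [show (r + 1 - (r + 1)) / 2 = 0 by omega, Nat.choose_zero_right]
      have c2 : (r + 1).choose ((r + 1 + (r + 1)) / 2 + 1) = 0 := by
        rw [show (r + 1 + (r + 1)) / 2 + 1 = r + 2 by omega]
        exact Nat.choose_eq_zero_of_lt (by omega)
      have c3 : r.choose ((r - r) / 2) = 1 := by
        rw [show (r - r) / 2 = 0 by omega, Nat.choose_zero_right]
      have c4 : r.choose ((r + r) / 2 + 1) = 0 := by
        rw [show (r + r) / 2 + 1 = r + 1 by omega]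
        exact Nat.choose_eq_zero_of_lt (by omega)
      simp [c1, c2, c3, c4]
    · -- r + 1 ≤ n, so r + 2 ≤ n + 1; check parity
      rcases Nat.even_or_odd (n + r) with ⟨t, ht⟩ | ⟨t, ht⟩
      · -- parity even, r + 2 ≤ n since n - r even and ≥ 1 means ≥ 2
        have hge2 : r + 2 ≤ n := by omega
        obtain ⟨k, hk⟩ : ∃ k, n = r + 2 * (k + 1) := ⟨t - r - 1, by omega⟩
        rw [B, B, B, if_pos ⟨by omega, by omega⟩, if_pos ⟨by omega, by omega⟩,
          if_pos ⟨by omega, by omega⟩]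
        have e1 : (n + 1 - (r + 1)) / 2 = k + 1 := by omega
        have e2 : (n + 1 + (r + 1)) / 2 + 1 = r + k + 3 := by omega
        have e3 : (n - r) / 2 = k + 1 := by omega
        have e4 : (n + r) / 2 + 1 = r + k + 2 := by omega
        have e5 : (n - (r + 2)) / 2 = k := by omega
        have e6 : (n + (r + 2)) / 2 + 1 = r + k + 3 := by omega
        simp only [e1, e2, e3, e4, e5, e6]
        obtain ⟨nn, hnn⟩ : ∃ nn, n = nn + 1 := ⟨n - 1, by omega⟩
        subst hnn
        have p1 : (nn + 1 + 1).choose (k + 1) = (nn + 1).choose k + (nn + 1).choose (k + 1) :=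
          Nat.choose_succ_succ _ _
        have p2 : (nn + 1 + 1).choose (r + k + 3)
            = (nn + 1).choose (r + k + 2) + (nn + 1).choose (r + k + 3) := by
          have := Nat.choose_succ_succ (nn + 1) (r + k + 2)
          convert this using 2 <;> omega
        rw [p1, p2]
        push_cast; ring
      · rw [B, B, B, if_neg (by omega), if_neg (by omega), if_neg (by omega)]
        ring
  · rw [B, B, B, if_neg (by omega), if_neg (by omega), if_neg (by omega)]
    ring

theorem P_eq_B : ∀ n r, (P n r : ℤ) = B n r := by
  intro n
  induction n with
  | zero =>
    intro r
    rw [P_zero]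
    rcases Nat.eq_zero_or_pos r with rfl | hr
    · rw [if_pos rfl, B, if_pos ⟨le_rfl, rfl⟩]
      norm_num
    · rw [if_neg (by omega), B, if_neg (by omega)]
      norm_num
  | succ n ih =>
    intro r
    rcases Nat.eq_zero_or_pos r with rfl | hr
    · rw [P_succ0, B_rec0, ih]
    · obtain ⟨s, rfl⟩ : ∃ s, r = s + 1 := ⟨r - 1, by omega⟩
      rw [P_succ', B_rec]
      push_cast [ih]
      ring

theorem catalan_int (m : ℕ) :
    (catalan m : ℤ) = ((2 * m).choose m : ℤ) - ((2 * m).choose (m + 1) : ℤ) := by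
  have h1 : (m + 1) * catalan m = (2 * m).choose m :=
    (succ_mul_catalan_eq_centralBinom m).trans (Nat.centralBinom_eq_two_mul_choose m)
  have h2 : (2 * m).choose (m + 1) * (m + 1) = (2 * m).choose m * m := by
    have h := Nat.choose_succ_right_eq (2 * m) m
    rwa [show 2 * m - m = m by omega] at h
  have h3 : ((m : ℤ) + 1) * (catalan m : ℤ) = ((2 * m).choose m : ℤ) := by exact_mod_cast h1
  have h4 : ((2 * m).choose (m + 1) : ℤ) * ((m : ℤ) + 1) = ((2 * m).choose m : ℤ) * m := by
    exact_mod_cast h2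
  have h5 : ((m : ℤ) + 1) ≠ 0 := by positivity
  apply mul_left_cancel₀ h5
  rw [h3]
  linear_combination h4

theorem P_catalan (m : ℕ) : P (2 * m) 0 = catalan m := by
  have h1 := P_eq_B (2 * m) 0
  rw [B, if_pos ⟨by omega, by omega⟩] at h1
  have e1 : (2 * m - 0) / 2 = m := by omega
  have e2 : (2 * m + 0) / 2 + 1 = m + 1 := by omega
  rw [e1, e2, ← catalan_int] at h1
  exact_mod_cast h1

theorem P_odd (m : ℕ) : P (2 * m + 1) 1 + P (2 * m + 1) 3 + catalan (m + 1) = catalan (m + 2) := by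
  have h1 : P (2 * m + 2) 2 = P (2 * m + 1) 1 + P (2 * m + 1) 3 := by
    have := P_succ' (2 * m + 1) 1; norm_num at this ⊢; convert this using 2 <;> try omega
  have h2 : catalan (m + 1) = P (2 * m + 2) 0 := by
    have := P_catalan (m + 1); rw [← this]; congr 1 <;> try omega
  have h3 : catalan (m + 2) = P (2 * m + 4) 0 := by
    have := P_catalan (m + 2); rw [← this]; congr 1 <;> try omega
  have h4 : P (2 * m + 4) 0 = P (2 * m + 3) 1 := by
    have := P_succ0 (2 * m + 3); convert this using 2 <;> try omega
  have h5 : P (2 * m + 3) 1 = P (2 * m + 2) 0 + P (2 * m + 2) 2 := by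
    have := P_succ' (2 * m + 2) 0; convert this using 2 <;> try omega
  omega

theorem P_even (m : ℕ) : P (2 * m) 0 + P (2 * m) 2 + P (2 * m) 4 + 2 * catalan (m + 1)
    = catalan (m + 2) + catalan m := by
  have h0 : catalan m = P (2 * m) 0 := (P_catalan m).symm
  have h2 : catalan (m + 1) = P (2 * m + 2) 0 := by
    have := P_catalan (m + 1); rw [← this]; congr 1 <;> try omega
  have h3 : catalan (m + 2) = P (2 * m + 4) 0 := by
    have := P_catalan (m + 2); rw [← this]; congr 1 <;> try omega
  have h4 : P (2 * m + 4) 0 = P (2 * m + 3) 1 := by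
    have := P_succ0 (2 * m + 3); convert this using 2 <;> try omega
  have h5 : P (2 * m + 3) 1 = P (2 * m + 2) 0 + P (2 * m + 2) 2 := by
    have := P_succ' (2 * m + 2) 0; convert this using 2 <;> try omega
  have h6 : P (2 * m + 2) 2 = P (2 * m + 1) 1 + P (2 * m + 1) 3 := by
    have := P_succ' (2 * m + 1) 1; convert this using 2 <;> try omega
  have h7 : P (2 * m + 2) 0 = P (2 * m + 1) 1 := by
    have := P_succ0 (2 * m + 1); convert this using 2 <;> try omega
  have h8 : P (2 * m + 1) 1 = P (2 * m) 0 + P (2 * m) 2 := by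
    have := P_succ' (2 * m) 0; convert this using 2 <;> try omega
  have h9 : P (2 * m + 1) 3 = P (2 * m) 2 + P (2 * m) 4 := by
    have := P_succ' (2 * m) 2; convert this using 2 <;> try omega
  omega

/-- component invariant on the vertex set -/
def gV (n : ℕ) (p : ℕ → ℕ) : V n → ℕ × ℕ :=
  Sum.elim (fun i => (min i.val (p i.val), if p i.val = i.val then 2 else 0))
    (fun i => (min i.val (p i.val), if p i.val = i.val then 2 else 1))

/-- the Temperley–Lieb diagram attached to a matching -/
def toPD (n : ℕ) (p : ℕ → ℕ) : PD n := Setoid.ker (gV n p)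

theorem minlem {p : ℕ → ℕ} (hp : ∀ i, p (p i) = i) {a b : ℕ} :
    min a (p a) = min b (p b) ↔ (a = b ∨ p a = b) := by
  constructor
  · intro h
    rcases le_total a (p a) with h1 | h1 <;> rcases le_total b (p b) with h2 | h2
    · rw [min_eq_left h1, min_eq_left h2] at h; exact Or.inl h
    · rw [min_eq_left h1, min_eq_right h2] at h
      right; rw [h, hp]
    · rw [min_eq_right h1, min_eq_left h2] at h; exact Or.inr h
    · rw [min_eq_right h1, min_eq_right h2] at h
      left; have := congrArg p h; rwa [hp, hp] at this
  · rintro (rfl | h)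
    · rfl
    · rw [← h, hp, min_comm]

theorem toPD_ll {n : ℕ} {p : ℕ → ℕ} (hp : ∀ i, p (p i) = i) {i j : Fin n} :
    (toPD n p).r (Sum.inl i) (Sum.inl j) ↔ (j = i ∨ (j.val = p i.val ∧ p i.val ≠ i.val)) := by
  show gV n p (Sum.inl i) = gV n p (Sum.inl j) ↔ _
  simp only [gV, Sum.elim_inl, Prod.mk.injEq, Fin.ext_iff]
  constructor
  · rintro ⟨h1, h2⟩
    split_ifs at h2 <;> rcases (minlem hp).1 h1 with h3 | h3 <;> omega
  · rintro (h | ⟨h1, h2⟩)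
    · rw [show (j : ℕ) = (i : ℕ) from by omega]
      exact ⟨rfl, rfl⟩
    · have hpj : p j.val = i.val := by rw [h1, hp]
      refine ⟨by omega, ?_⟩
      rw [if_neg h2, if_neg (by omega)]

theorem toPD_rr {n : ℕ} {p : ℕ → ℕ} (hp : ∀ i, p (p i) = i) {i j : Fin n} :
    (toPD n p).r (Sum.inr i) (Sum.inr j) ↔ (j = i ∨ (j.val = p i.val ∧ p i.val ≠ i.val)) := by
  show gV n p (Sum.inr i) = gV n p (Sum.inr j) ↔ _
  simp only [gV, Sum.elim_inr, Prod.mk.injEq, Fin.ext_iff]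
  constructor
  · rintro ⟨h1, h2⟩
    split_ifs at h2 <;> rcases (minlem hp).1 h1 with h3 | h3 <;> omega
  · rintro (h | ⟨h1, h2⟩)
    · rw [show (j : ℕ) = (i : ℕ) from by omega]
      exact ⟨rfl, rfl⟩
    · have hpj : p j.val = i.val := by rw [h1, hp]
      refine ⟨by omega, ?_⟩
      rw [if_neg h2, if_neg (by omega)]

theorem toPD_lr {n : ℕ} {p : ℕ → ℕ} (hp : ∀ i, p (p i) = i) {i j : Fin n} :
    (toPD n p).r (Sum.inl i) (Sum.inr j) ↔ (j = i ∧ p i.val = i.val) := by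
  show gV n p (Sum.inl i) = gV n p (Sum.inr j) ↔ _
  simp only [gV, Sum.elim_inl, Sum.elim_inr, Prod.mk.injEq, Fin.ext_iff]
  constructor
  · rintro ⟨h1, h2⟩
    split_ifs at h2 <;> omega
  · rintro ⟨h1, h2⟩
    have h3 : (j : ℕ) = (i : ℕ) := by omega
    rw [h3, if_pos h2, if_pos h2]
    exact ⟨rfl, rfl⟩

theorem toPD_rl {n : ℕ} {p : ℕ → ℕ} (hp : ∀ i, p (p i) = i) {i j : Fin n} :
    (toPD n p).r (Sum.inr i) (Sum.inl j) ↔ (j = i ∧ p i.val = i.val) := by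
  constructor
  · intro h
    have h2 : (toPD n p).r (Sum.inl j) (Sum.inr i) := (toPD n p).symm h
    rw [toPD_lr hp] at h2
    obtain ⟨h3, h4⟩ := h2
    have h5 : (i : ℕ) = (j : ℕ) := by rw [h3]
    exact ⟨by rw [h3], by rw [h5]; exact h4⟩
  · rintro ⟨h1, h2⟩
    have h5 : (j : ℕ) = (i : ℕ) := by rw [h1]
    have h6 : (toPD n p).r (Sum.inl j) (Sum.inr i) :=
      (toPD_lr hp).2 ⟨by rw [h1], by rw [h5]; exact h2⟩
    exact (toPD n p).symm h6

section ToPDProps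
variable {n : ℕ} {p : ℕ → ℕ}

theorem toPD_blocks (hp : MC n p) : BlocksExactlyTwo (toPD n p) := by
  have hinv := hp.1
  constructor
  · rintro (i | i) y z hxy hxz
    · -- x = inl i
      have key : ∀ u : V n, (toPD n p).r (Sum.inl i) u →
          u = Sum.inl i ∨ (p i.val = i.val ∧ u = Sum.inr i) ∨
          (p i.val ≠ i.val ∧ u = Sum.inl (⟨p i.val, hp.lt i.isLt⟩ : Fin n)) := by
        rintro (j | j) h
        · rw [toPD_ll hinv] at h
          rcases h with h | ⟨h1, h2⟩
          · left; rw [h]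
          · right; right; exact ⟨h2, by congr 1; exact Fin.ext h1⟩
        · rw [toPD_lr hinv] at h
          right; left; exact ⟨h.2, by rw [h.1]⟩
      rcases key y hxy with h | ⟨h1, h2⟩ | ⟨h1, h2⟩ <;>
        rcases key z hxz with g | ⟨g1, g2⟩ | ⟨g1, g2⟩ <;>
        simp_all
    · -- x = inr i
      have key : ∀ u : V n, (toPD n p).r (Sum.inr i) u →
          u = Sum.inr i ∨ (p i.val = i.val ∧ u = Sum.inl i) ∨
          (p i.val ≠ i.val ∧ u = Sum.inr (⟨p i.val, hp.lt i.isLt⟩ : Fin n)) := by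
        rintro (j | j) h
        · rw [toPD_rl hinv] at h
          right; left; exact ⟨h.2, by rw [h.1]⟩
        · rw [toPD_rr hinv] at h
          rcases h with h | ⟨h1, h2⟩
          · left; rw [h]
          · right; right; exact ⟨h2, by congr 1; exact Fin.ext h1⟩
      rcases key y hxy with h | ⟨h1, h2⟩ | ⟨h1, h2⟩ <;>
        rcases key z hxz with g | ⟨g1, g2⟩ | ⟨g1, g2⟩ <;>
        simp_all
  · rintro (i | i)
    · rcases eq_or_ne (p i.val) i.val with hf | hf
      · exact ⟨Sum.inr i, by simp, (toPD_lr hinv).2 ⟨rfl, hf⟩⟩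
      · refine ⟨Sum.inl (⟨p i.val, hp.lt i.isLt⟩ : Fin n), ?_, ?_⟩
        · intro he
          rw [Sum.inl.injEq, Fin.ext_iff] at he
          exact hf he
        · exact (toPD_ll hinv).2 (Or.inr ⟨rfl, hf⟩)
    · rcases eq_or_ne (p i.val) i.val with hf | hf
      · refine ⟨Sum.inl i, by simp, ?_⟩
        exact (toPD n p).symm ((toPD_lr hinv).2 ⟨rfl, hf⟩)
      · refine ⟨Sum.inr (⟨p i.val, hp.lt i.isLt⟩ : Fin n), ?_, ?_⟩
        · intro he
          rw [Sum.inr.injEq, Fin.ext_iff] at he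
          exact hf he
        · exact (toPD_rr hinv).2 (Or.inr ⟨rfl, hf⟩)

theorem toPD_star (hp : MC n p) : starPD (toPD n p) = toPD n p := by
  have hinv := hp.1
  apply Setoid.ext
  intro x y
  show (toPD n p).r (Sum.elim Sum.inr Sum.inl x) (Sum.elim Sum.inr Sum.inl y) ↔ _
  rcases x with i | i <;> rcases y with j | j <;>
    simp only [Sum.elim_inl, Sum.elim_inr]
  · rw [toPD_rr hinv, toPD_ll hinv]
  · rw [toPD_rl hinv, toPD_lr hinv]
  · rw [toPD_lr hinv, toPD_rl hinv]
  · rw [toPD_ll hinv, toPD_rr hinv]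

theorem toPD_planar (hp : MC n p) : IsPlanar (toPD n p) := by
  have hinv := hp.1
  rintro ⟨x, y, z, w, hxy, hzw, hxz, h1, h2, h3⟩
  rcases x with i | i <;> rcases y with j | j <;> rcases z with a | a <;> rcases w with b | b <;>
    simp only [vpos, Sum.elim_inl, Sum.elim_inr] at h1 h2 h3 <;>
    [rw [toPD_ll hinv] at hxy; rw [toPD_ll hinv] at hxy;
     rw [toPD_ll hinv] at hxy; rw [toPD_ll hinv] at hxy;
     rw [toPD_lr hinv] at hxy; rw [toPD_lr hinv] at hxy;
     rw [toPD_lr hinv] at hxy; rw [toPD_lr hinv] at hxy;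
     rw [toPD_rl hinv] at hxy; rw [toPD_rl hinv] at hxy;
     rw [toPD_rl hinv] at hxy; rw [toPD_rl hinv] at hxy;
     rw [toPD_rr hinv] at hxy; rw [toPD_rr hinv] at hxy;
     rw [toPD_rr hinv] at hxy; rw [toPD_rr hinv] at hxy]
  -- 16 cases
  -- x=Li y=Lj cases: z/w of shapes LL LR RL RR
  · rw [toPD_ll hinv] at hzw
    rcases hxy with he | ⟨e1, e2⟩
    · rw [he] at h2; omega
    rcases hzw with he | ⟨e3, e4⟩
    · rw [he] at h3; omega
    have hnc := hp.2.2.1 i.val a.val (by omega) (by omega)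
    omega
  · rw [toPD_lr hinv] at hzw
    rcases hxy with he | ⟨e1, e2⟩
    · rw [he] at h2; omega
    exact hp.2.2.2 i.val a.val (by omega) (by omega) hzw.2
  · rw [toPD_rl hinv] at hzw
    have := b.isLt; have := a.isLt; omega
  · rw [toPD_rr hinv] at hzw
    have := j.isLt; have := a.isLt; omega
  · rw [toPD_ll hinv] at hzw
    have := j.isLt; have := b.isLt; omega
  · rw [toPD_lr hinv] at hzw
    obtain ⟨e1, e2⟩ := hxy
    obtain ⟨e3, e4⟩ := hzw
    have e1' : j.val = i.val := by rw [e1]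
    have e3' : b.val = a.val := by rw [e3]
    have := j.isLt; have := a.isLt; omega
  · rw [toPD_rl hinv] at hzw
    have := b.isLt; have := a.isLt; omega
  · rw [toPD_rr hinv] at hzw
    obtain ⟨e1, e2⟩ := hxy
    have e1' : j.val = i.val := by rw [e1]
    rcases hzw with he | ⟨e3, e4⟩
    · rw [he] at h3; omega
    have hia := hp.1 a.val
    have := j.isLt; have := a.isLt; have := b.isLt; have := i.isLt
    have hexp := hp.2.2.2 (p a.val) i.val (by omega) (by omega)
    exact hexp e2
  · rw [toPD_ll hinv] at hzw
    have := i.isLt; have := a.isLt; omega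
  · rw [toPD_lr hinv] at hzw
    have := i.isLt; have := a.isLt; omega
  · rw [toPD_rl hinv] at hzw
    have := i.isLt; have := a.isLt; omega
  · rw [toPD_rr hinv] at hzw
    have := i.isLt; have := j.isLt; omega
  · rw [toPD_ll hinv] at hzw
    have := i.isLt; have := a.isLt; omega
  · rw [toPD_lr hinv] at hzw
    have := i.isLt; have := a.isLt; omega
  · rw [toPD_rl hinv] at hzw
    have := b.isLt; have := a.isLt; omega
  · rw [toPD_rr hinv] at hzw
    rcases hxy with he | ⟨e1, e2⟩
    · rw [he] at h2; omega
    rcases hzw with he | ⟨e3, e4⟩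
    · rw [he] at h3; omega
    have hia := hp.1 a.val
    have hii := hp.1 i.val
    have := j.isLt; have := a.isLt; have := b.isLt; have := i.isLt
    have hnc := hp.2.2.1 (p a.val) (p i.val) (by omega) (by omega)
    omega

end ToPDProps

section CompRank
variable {n : ℕ} {p : ℕ → ℕ}

/-- component invariant on the three-row vertex set -/
def gW (n : ℕ) (p : ℕ → ℕ) : W n → ℕ × ℕ
  | .inl i => (min i.val (p i.val), if p i.val = i.val then 3 else 0)
  | .inr (.inl i) => (min i.val (p i.val), if p i.val = i.val then 3 else 1)
  | .inr (.inr i) => (min i.val (p i.val), if p i.val = i.val then 3 else 2)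

theorem keyij (hp : ∀ i, p (p i) = i) {i j : Fin n}
    (h : j = i ∨ (j.val = p i.val ∧ p i.val ≠ i.val)) :
    min i.val (p i.val) = min j.val (p j.val) ∧ (p i.val = i.val ↔ p j.val = j.val) := by
  rcases h with he | ⟨h1, h2⟩
  · rw [he]; exact ⟨rfl, Iff.rfl⟩
  · have hpj : p j.val = i.val := by rw [h1, hp]
    constructor
    · exact (minlem hp).2 (Or.inr h1.symm)
    · constructor <;> intro hh <;> omega

theorem step_ker (hp : MC n p) {u v : W n}
    (h : stepRel (toPD n p) (toPD n p) u v) : gW n p u = gW n p v := by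
  have hinv := hp.1
  rcases h with ⟨x, y, hr, hu, hv⟩ | ⟨x, y, hr, hu, hv⟩
  · rcases x with i | i <;> rcases y with j | j
    · rw [toPD_ll hinv] at hr
      obtain ⟨hm, hf⟩ := keyij hinv hr
      subst hu hv
      simp only [topmid, Sum.elim_inl, gW]
      rw [hm]
      congr 1
      split_ifs <;> omega
    · rw [toPD_lr hinv] at hr
      obtain ⟨he, hf⟩ := hr
      have he' : j.val = i.val := by rw [he]
      subst hu hv
      simp only [topmid, Sum.elim_inl, Sum.elim_inr, gW]
      have hfj : p j.val = j.val := by rw [he', hf]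
      rw [if_pos hf, if_pos hfj]
      congr 1
      omega
    · rw [toPD_rl hinv] at hr
      obtain ⟨he, hf⟩ := hr
      have he' : j.val = i.val := by rw [he]
      subst hu hv
      simp only [topmid, Sum.elim_inl, Sum.elim_inr, gW]
      have hfj : p j.val = j.val := by rw [he', hf]
      rw [if_pos hf, if_pos hfj]
      congr 1
      omega
    · rw [toPD_rr hinv] at hr
      obtain ⟨hm, hf⟩ := keyij hinv hr
      subst hu hv
      simp only [topmid, Sum.elim_inr, gW]
      rw [hm]
      congr 1
      split_ifs <;> omega
  · rcases x with i | i <;> rcases y with j | j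
    · rw [toPD_ll hinv] at hr
      obtain ⟨hm, hf⟩ := keyij hinv hr
      subst hu hv
      simp only [midbot, Sum.elim_inl, gW]
      rw [hm]
      congr 1
      split_ifs <;> omega
    · rw [toPD_lr hinv] at hr
      obtain ⟨he, hf⟩ := hr
      have he' : j.val = i.val := by rw [he]
      subst hu hv
      simp only [midbot, Sum.elim_inl, Sum.elim_inr, gW]
      have hfj : p j.val = j.val := by rw [he', hf]
      rw [if_pos hf, if_pos hfj]
      congr 1
      omega
    · rw [toPD_rl hinv] at hr
      obtain ⟨he, hf⟩ := hr
      have he' : j.val = i.val := by rw [he]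
      subst hu hv
      simp only [midbot, Sum.elim_inl, Sum.elim_inr, gW]
      have hfj : p j.val = j.val := by rw [he', hf]
      rw [if_pos hf, if_pos hfj]
      congr 1
      omega
    · rw [toPD_rr hinv] at hr
      obtain ⟨hm, hf⟩ := keyij hinv hr
      subst hu hv
      simp only [midbot, Sum.elim_inr, gW]
      rw [hm]
      congr 1
      split_ifs <;> omega

theorem outer_ker (hp : MC n p) {x y : V n} :
    gW n p (outer x) = gW n p (outer y) ↔ gV n p x = gV n p y := by
  rcases x with i | i <;> rcases y with j | j <;>
    simp only [outer, Sum.elim_inl, Sum.elim_inr, gW, gV, Prod.mk.injEq] <;>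
    constructor <;> rintro ⟨hm, ht⟩ <;> refine ⟨hm, ?_⟩ <;> split_ifs at ht ⊢ <;> omega

theorem toPD_comp (hp : MC n p) : comp (toPD n p) (toPD n p) = toPD n p := by
  have hinv := hp.1
  apply Setoid.ext
  intro x y
  show Relation.EqvGen (stepRel (toPD n p) (toPD n p)) (outer x) (outer y) ↔ _
  have eqvgen_ker : ∀ u v : W n,
      Relation.EqvGen (stepRel (toPD n p) (toPD n p)) u v → gW n p u = gW n p v := by
    intro u v h
    induction h with
    | rel _ _ h => exact step_ker hp h
    | refl => rfl
    | symm _ _ _ ih => exact ih.symm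
    | trans _ _ _ _ _ ih1 ih2 => exact ih1.trans ih2
  constructor
  · intro h
    exact (outer_ker hp).1 (eqvgen_ker _ _ h)
  · intro h
    rcases x with i | i <;> rcases y with j | j
    · exact Relation.EqvGen.rel _ _ (Or.inl ⟨Sum.inl i, Sum.inl j, h, rfl, rfl⟩)
    · -- vertical: two steps through the middle row
      have hf := (toPD_lr hinv).1 h
      have h2 : (toPD n p).r (Sum.inl j) (Sum.inr j) := (toPD_lr hinv).2 ⟨rfl, by
        have he' : j.val = i.val := by rw [hf.1]
        rw [he', hf.2]⟩
      refine Relation.EqvGen.trans _ (Sum.inr (Sum.inl j)) _ ?_ ?_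
      · exact Relation.EqvGen.rel _ _ (Or.inl ⟨Sum.inl i, Sum.inr j, h, rfl, rfl⟩)
      · exact Relation.EqvGen.rel _ _ (Or.inr ⟨Sum.inl j, Sum.inr j, h2, rfl, rfl⟩)
    · have hf := (toPD_rl hinv).1 h
      refine Relation.EqvGen.trans _ (Sum.inr (Sum.inl i)) _ ?_ ?_
      · exact Relation.EqvGen.rel _ _ (Or.inr ⟨Sum.inr i, Sum.inl i,
          (toPD_rl hinv).2 ⟨rfl, hf.2⟩, rfl, rfl⟩)
      · exact Relation.EqvGen.rel _ _ (Or.inl ⟨Sum.inr i, Sum.inl j, h, rfl, rfl⟩)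
    · exact Relation.EqvGen.rel _ _ (Or.inr ⟨Sum.inr i, Sum.inr j, h, rfl, rfl⟩)

theorem toPD_rank (hp : MC n p) : rank (toPD n p) = fc p n := by
  have hinv := hp.1
  have h1 : Nat.card {i : Fin n // p i.val = i.val} = fc p n := by
    rw [Nat.card_eq_fintype_card, Fintype.card_subtype, fc]
    apply Finset.card_bij (fun (i : Fin n) _ => i.val)
    · intro a ha
      simp only [Finset.mem_filter, Finset.mem_univ, true_and] at ha
      simp only [Finset.mem_filter, Finset.mem_range]
      exact ⟨a.isLt, ha⟩
    · intro a _ b _ he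
      exact Fin.ext he
    · intro b hb
      simp only [Finset.mem_filter, Finset.mem_range] at hb
      exact ⟨⟨b, hb.1⟩, by simp [hb.2], rfl⟩
  rw [rank, ← h1]
  apply Nat.card_congr
  apply Equiv.symm
  apply Equiv.ofBijective (f := fun i =>
    ⟨Quotient.mk (toPD n p) (Sum.inl i.1), ⟨i.1, rfl⟩,
      ⟨i.1, Quotient.sound ((toPD_rl hinv).2 ⟨rfl, i.2⟩)⟩⟩)
  constructor
  · intro i j he
    have h2 : (toPD n p).r (Sum.inl i.1) (Sum.inl j.1) :=
      Quotient.exact (congrArg Subtype.val he)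
    rw [toPD_ll hinv] at h2
    rcases h2 with h2 | ⟨h2, h3⟩
    · exact Subtype.ext h2.symm
    · exact Subtype.ext (Fin.ext (by have := i.2; have := j.2; omega))
  · rintro ⟨c, ⟨i, hi⟩, ⟨j, hj⟩⟩
    have h2 : (toPD n p).r (Sum.inl i) (Sum.inr j) := Quotient.exact (hi.trans hj.symm)
    rw [toPD_lr hinv] at h2
    exact ⟨⟨i, h2.2⟩, Subtype.ext hi⟩

end CompRank

section Forward
variable {n : ℕ}

theorem main_forward (α : PD n) (hB : BlocksExactlyTwo α) (hPl : IsPlanar α)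
    (hSt : starPD α = α) : ∃ p : ℕ → ℕ, MC n p ∧ toPD n p = α := by
  classical
  -- mirror symmetry
  have key : ∀ x y : V n, α.r (Sum.elim Sum.inr Sum.inl x) (Sum.elim Sum.inr Sum.inl y) ↔
      α.r x y := by
    intro x y
    conv_rhs => rw [← hSt]
    exact (Setoid.comap_rel _ _ _ _).symm
  -- partner function
  have hPa : ∀ x : V n, ∃ y, y ≠ x ∧ α.r x y := hB.2
  set Pa : V n → V n := fun x => (hPa x).choose with hPadef
  have hPa1 : ∀ x, Pa x ≠ x := fun x => (hPa x).choose_spec.1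
  have hPa2 : ∀ x, α.r x (Pa x) := fun x => (hPa x).choose_spec.2
  have huniq : ∀ x y, α.r x y → y = x ∨ y = Pa x := by
    intro x y h
    rcases hB.1 x y (Pa x) h (hPa2 x) with h1 | h1 | h1
    · exact Or.inl h1.symm
    · exact absurd h1.symm (hPa1 x)
    · exact Or.inr h1
  -- no diagonal blocks
  have hdiag : ∀ i j : Fin n, α.r (Sum.inl i) (Sum.inr j) → j = i := by
    intro i j h
    by_contra hne
    have hne' : i.val ≠ j.val := fun he => hne (Fin.ext he.symm)
    have hsym : α.r (Sum.inl j) (Sum.inr i) := by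
      rw [← key]
      simp only [Sum.elim_inl, Sum.elim_inr]
      exact α.symm h
    have hni := i.isLt
    have hnj := j.isLt
    rcases lt_or_gt_of_ne hne' with hlt | hlt
    · -- i < j : blocks {inl i, inr j} and {inl j, inr i} cross
      refine hPl ⟨Sum.inl i, Sum.inr j, Sum.inl j, Sum.inr i, h, hsym, ?_, ?_, ?_, ?_⟩
      · intro hrel
        rcases hB.1 (Sum.inl i) (Sum.inr j) (Sum.inl j) h hrel with h1 | h1 | h1
        · exact absurd h1 (by simp)
        · simp only [Sum.inl.injEq] at h1; exact hne (by rw [h1])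
        · exact absurd h1 (by simp)
      · simp only [vpos, Sum.elim_inl, Sum.elim_inr]; omega
      · simp only [vpos, Sum.elim_inl, Sum.elim_inr]; omega
      · simp only [vpos, Sum.elim_inl, Sum.elim_inr]; omega
    · -- j < i
      refine hPl ⟨Sum.inl j, Sum.inr i, Sum.inl i, Sum.inr j, hsym, h, ?_, ?_, ?_, ?_⟩
      · intro hrel
        rcases hB.1 (Sum.inl j) (Sum.inr i) (Sum.inl i) hsym hrel with h1 | h1 | h1
        · exact absurd h1 (by simp)
        · simp only [Sum.inl.injEq] at h1; exact hne (by rw [← h1])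
        · exact absurd h1 (by simp)
      · simp only [vpos, Sum.elim_inl, Sum.elim_inr]; omega
      · simp only [vpos, Sum.elim_inl, Sum.elim_inr]; omega
      · simp only [vpos, Sum.elim_inl, Sum.elim_inr]; omega
  -- the matching
  set p : ℕ → ℕ := fun m =>
    if h : m < n then Sum.elim Fin.val Fin.val (Pa (Sum.inl ⟨m, h⟩)) else m with hpdef
  have hkey : ∀ i : Fin n, (p i.val = i.val ∧ α.r (Sum.inl i) (Sum.inr i)) ∨
      (∃ j : Fin n, p i.val = j.val ∧ j ≠ i ∧ α.r (Sum.inl i) (Sum.inl j)) := by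
    intro i
    have hval : p i.val = Sum.elim Fin.val Fin.val (Pa (Sum.inl i)) := by
      rw [hpdef]
      simp only [i.isLt, dif_pos, Fin.eta]
    rcases hc : Pa (Sum.inl i) with j | j
    · right
      refine ⟨j, by rw [hval, hc]; simp, ?_, by have := hPa2 (Sum.inl i); rwa [hc] at this⟩
      intro he
      exact hPa1 (Sum.inl i) (by rw [hc, he])
    · left
      have hrel := hPa2 (Sum.inl i)
      rw [hc] at hrel
      have hj : j = i := hdiag i j hrel
      subst hj
      exact ⟨by rw [hval, hc]; simp, hrel⟩
  have hsupp : ∀ m, n ≤ m → p m = m := by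
    intro m hm
    rw [hpdef]
    simp only [dif_neg (by omega : ¬ m < n)]
  have hplt : ∀ i : Fin n, p i.val < n := by
    intro i
    rcases hkey i with ⟨h1, _⟩ | ⟨j, h1, _, _⟩
    · rw [h1]; exact i.isLt
    · rw [h1]; exact j.isLt
  -- involution
  have hInv : ∀ m, p (p m) = m := by
    intro m
    rcases lt_or_ge m n with hm | hm
    · rcases hkey ⟨m, hm⟩ with ⟨h1, _⟩ | ⟨j, h1, h2, h3⟩
      · simp only at h1
        rw [h1, h1]
      · simp only at h1
        rw [h1]
        rcases hkey j with ⟨g1, g2⟩ | ⟨k, g1, g2, g3⟩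
        · -- j is vertical but also in an arc with i : contradiction
          exfalso
          have hs : α.r (Sum.inl j) (Sum.inl ⟨m, hm⟩) := α.symm h3
          rcases hB.1 (Sum.inl j) (Sum.inl ⟨m, hm⟩) (Sum.inr j) hs g2 with e | e | e
          · simp only [Sum.inl.injEq] at e; exact h2 e
          · exact absurd e (by simp)
          · exact absurd e (by simp)
        · -- partner of j is k ; must be i
          have hs : α.r (Sum.inl j) (Sum.inl ⟨m, hm⟩) := α.symm h3
          rcases hB.1 (Sum.inl j) (Sum.inl ⟨m, hm⟩) (Sum.inl k) hs g3 with e | e | e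
          · simp only [Sum.inl.injEq] at e; exact absurd e h2
          · simp only [Sum.inl.injEq] at e; exact absurd e.symm g2
          · simp only [Sum.inl.injEq] at e
            rw [g1, ← e]
    · rw [hsupp m hm, hsupp m hm]
  -- planarity consequences : noncrossing
  have hNC : ∀ a b, a < b → b < p a → p b < p a := by
    intro a b hab hbpa
    rcases lt_or_ge a n with ha | ha
    · rcases hkey ⟨a, ha⟩ with ⟨h1, _⟩ | ⟨j, h1, h2, h3⟩
      · simp only at h1; omega
      · simp only at h1
        have hb : b < n := by have := j.isLt; omega
        rcases hkey ⟨b, hb⟩ with ⟨g1, g2⟩ | ⟨k, g1, g2, g3⟩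
        · -- b vertical under arc {a, j} : crossing
          exfalso
          refine hPl ⟨Sum.inl ⟨a, ha⟩, Sum.inl j, Sum.inl ⟨b, hb⟩, Sum.inr ⟨b, hb⟩, h3, g2,
            ?_, ?_, ?_, ?_⟩
          · intro hrel
            rcases hB.1 (Sum.inl ⟨a, ha⟩) (Sum.inl j) (Sum.inl ⟨b, hb⟩) h3 hrel
              with e | e | e <;> (simp only [Sum.inl.injEq, Fin.ext_iff] at e; omega)
          · simp only [vpos, Sum.elim_inl]; omega
          · simp only [vpos, Sum.elim_inl]; omega
          · simp only [vpos, Sum.elim_inl, Sum.elim_inr]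
            have := j.isLt; omega
        · -- b in arc {b, k} : k must be inside (a, j)
          simp only at g1
          by_contra hge
          push_neg at hge
          have hkj : k.val ≠ j.val := by
            intro he
            -- then p b = p a, so b = a
            have : p b = p a := by omega
            have := congrArg p this
            rw [hInv, hInv] at this
            omega
          have hkgt : j.val < k.val := by omega
          refine hPl ⟨Sum.inl ⟨a, ha⟩, Sum.inl j, Sum.inl ⟨b, hb⟩, Sum.inl k, h3, g3,
            ?_, ?_, ?_, ?_⟩
          · intro hrel
            rcases hB.1 (Sum.inl ⟨a, ha⟩) (Sum.inl j) (Sum.inl ⟨b, hb⟩) h3 hrel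
              with e | e | e <;> (simp only [Sum.inl.injEq, Fin.ext_iff] at e; omega)
          · simp only [vpos, Sum.elim_inl]; omega
          · simp only [vpos, Sum.elim_inl]; omega
          · simp only [vpos, Sum.elim_inl]; omega
    · rw [hsupp a ha] at hbpa; omega
  have hEx : ∀ a i, a < i → i < p a → p i ≠ i := by
    intro a i hai hipa hfix
    rcases lt_or_ge a n with ha | ha
    · rcases hkey ⟨a, ha⟩ with ⟨h1, _⟩ | ⟨j, h1, h2, h3⟩
      · simp only at h1; omega
      · simp only at h1
        have hi : i < n := by have := j.isLt; omega
        rcases hkey ⟨i, hi⟩ with ⟨g1, g2⟩ | ⟨k, g1, g2, g3⟩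
        · -- i vertical under arc {a, j} : crossing
          refine hPl ⟨Sum.inl ⟨a, ha⟩, Sum.inl j, Sum.inl ⟨i, hi⟩, Sum.inr ⟨i, hi⟩, h3, g2,
            ?_, ?_, ?_, ?_⟩
          · intro hrel
            rcases hB.1 (Sum.inl ⟨a, ha⟩) (Sum.inl j) (Sum.inl ⟨i, hi⟩) h3 hrel
              with e | e | e <;> (simp only [Sum.inl.injEq, Fin.ext_iff] at e; omega)
          · simp only [vpos, Sum.elim_inl]; omega
          · simp only [vpos, Sum.elim_inl]; omega
          · simp only [vpos, Sum.elim_inl, Sum.elim_inr]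
            have := j.isLt; omega
        · have g1' : p i = k.val := g1
          have e0 : ((⟨i, hi⟩ : Fin n) : ℕ) = i := rfl
          exact g2 (Fin.ext (by omega))
    · rw [hsupp a ha] at hipa; omega
  refine ⟨p, ⟨hInv, hsupp, hNC, hEx⟩, ?_⟩
  -- toPD n p = α
  apply Setoid.ext
  have hll : ∀ i j : Fin n, (toPD n p).r (Sum.inl i) (Sum.inl j) ↔ α.r (Sum.inl i) (Sum.inl j) := by
    intro i j
    rw [toPD_ll hInv]
    constructor
    · rintro (he | ⟨he1, he2⟩)
      · rw [he]
      · rcases hkey i with ⟨g1, _⟩ | ⟨k, g1, g2, g3⟩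
        · omega
        · have : j = k := Fin.ext (by omega)
          rw [this]; exact g3
    · intro h
      rcases eq_or_ne j i with he | hne
      · exact Or.inl he
      rcases hkey i with ⟨g1, g2⟩ | ⟨k, g1, g2, g3⟩
      · exfalso
        rcases hB.1 (Sum.inl i) (Sum.inl j) (Sum.inr i) h g2 with e | e | e
        · simp only [Sum.inl.injEq] at e; exact hne (by rw [e])
        · exact absurd e (by simp)
        · exact absurd e (by simp)
      · rcases hB.1 (Sum.inl i) (Sum.inl j) (Sum.inl k) h g3 with e | e | e
        · simp only [Sum.inl.injEq] at e; exact absurd e.symm hne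
        · simp only [Sum.inl.injEq] at e; exact absurd e.symm g2
        · right
          simp only [Sum.inl.injEq] at e
          have : j = k := e
          refine ⟨by rw [this]; omega, by
            intro hf
            rw [hf] at g1
            exact g2 (Fin.ext g1.symm)⟩
  have hlr : ∀ i j : Fin n, (toPD n p).r (Sum.inl i) (Sum.inr j) ↔ α.r (Sum.inl i) (Sum.inr j) := by
    intro i j
    rw [toPD_lr hInv]
    constructor
    · rintro ⟨he, hf⟩
      rcases hkey i with ⟨g1, g2⟩ | ⟨k, g1, g2, g3⟩
      · rw [he]; exact g2
      · exfalso; exact g2 (Fin.ext (by omega))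
    · intro h
      have he := hdiag i j h
      refine ⟨he, ?_⟩
      rcases hkey i with ⟨g1, g2⟩ | ⟨k, g1, g2, g3⟩
      · exact g1
      · exfalso
        rw [he] at h
        rcases hB.1 (Sum.inl i) (Sum.inr i) (Sum.inl k) h g3 with e | e | e
        · exact absurd e (by simp)
        · simp only [Sum.inl.injEq] at e; exact g2 e.symm
        · exact absurd e (by simp)
  intro x y
  rcases x with i | i <;> rcases y with j | j
  · exact hll i j
  · exact hlr i j
  · rw [toPD_rl hInv]
    have h2 := hlr i j
    rw [toPD_lr hInv] at h2
    exact h2.trans (key (Sum.inr i) (Sum.inl j))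
  · rw [toPD_rr hInv]
    have h2 := hll i j
    rw [toPD_ll hInv] at h2
    exact h2.trans (key (Sum.inr i) (Sum.inr j))

end Forward

theorem toPD_inj {n : ℕ} {p p' : ℕ → ℕ} (hp : MC n p) (hp' : MC n p')
    (h : toPD n p = toPD n p') : p = p' := by
  funext m
  rcases lt_or_ge m n with hm | hm
  · rcases eq_or_ne (p m) m with hf | hf
    · have h1 : (toPD n p).r (Sum.inl (⟨m, hm⟩ : Fin n)) (Sum.inr ⟨m, hm⟩) :=
        (toPD_lr hp.1).2 ⟨rfl, hf⟩
      rw [h] at h1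
      have h2 := (toPD_lr hp'.1).1 h1
      have h3 : p' m = m := h2.2
      rw [hf, h3]
    · have hlt := hp.lt hm
      have h1 : (toPD n p).r (Sum.inl (⟨m, hm⟩ : Fin n)) (Sum.inl ⟨p m, hlt⟩) :=
        (toPD_ll hp.1).2 (Or.inr ⟨rfl, hf⟩)
      rw [h] at h1
      have h2 := (toPD_ll hp'.1).1 h1
      rcases h2 with e | ⟨e1, e2⟩
      · exfalso
        rw [Fin.ext_iff] at e
        exact hf e
      · exact e1
  · rw [hp.2.1 m hm, hp'.2.1 m hm]

instance pd_finite (n : ℕ) : Finite (PD n) :=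
  Finite.of_injective (fun s : PD n => s.r)
    (fun s t h => Setoid.ext fun a b => iff_of_eq (congrFun (congrFun h a) b))

theorem count_eq (n r : ℕ) :
    Nat.card {α : PD n // (BlocksExactlyTwo α ∧ IsPlanar α) ∧ IsProjection α ∧ rank α = r}
      = P n r := by
  rw [P]
  apply Nat.card_congr
  refine (Equiv.ofBijective (fun q => ⟨toPD n q.1, ⟨toPD_blocks q.2.1, toPD_planar q.2.1⟩,
    ⟨toPD_comp q.2.1, toPD_star q.2.1⟩, by rw [toPD_rank q.2.1]; exact q.2.2⟩) ⟨?_, ?_⟩).symm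
  · intro q q' he
    exact Subtype.ext (toPD_inj q.2.1 q'.2.1 (congrArg Subtype.val he))
  · rintro ⟨α, ⟨hBl, hPlan⟩, ⟨hC, hS⟩, hrk⟩
    obtain ⟨p, hmc, htp⟩ := main_forward α hBl hPlan hS
    refine ⟨⟨p, hmc, ?_⟩, Subtype.ext htp⟩
    have h1 := toPD_rank hmc
    rw [htp] at h1
    omega

theorem card_iff {X : Type*} (A B : X → Prop) (h : ∀ x, A x ↔ B x) :
    Nat.card {x // A x} = Nat.card {x // B x} :=
  Nat.card_congr (Equiv.subtypeEquivRight h)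

theorem card_splitQ {X : Type*} [Finite X] (A B C : X → Prop)
    (hd : ∀ x, B x → C x → False) :
    Nat.card {x // A x ∧ (B x ∨ C x)}
      = Nat.card {x // A x ∧ B x} + Nat.card {x // A x ∧ C x} := by
  rw [← Nat.card_sum]
  apply Nat.card_congr
  refine (Equiv.ofBijective (Sum.elim
    (fun a => (⟨a.1, a.2.1, Or.inl a.2.2⟩ : {x // A x ∧ (B x ∨ C x)}))
    (fun a => (⟨a.1, a.2.1, Or.inr a.2.2⟩ : {x // A x ∧ (B x ∨ C x)}))) ⟨?_, ?_⟩).symm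
  · rintro (a | a) (b | b) he <;> simp only [Sum.elim_inl, Sum.elim_inr] at he <;>
      have hval := congrArg Subtype.val he
    · exact congrArg Sum.inl (Subtype.ext hval)
    · exact absurd (show C a.1 from by rw [show a.1 = b.1 from hval]; exact b.2.2)
        (fun hc => hd a.1 a.2.2 hc)
    · exact absurd (show C b.1 from by rw [show b.1 = a.1 from hval.symm]; exact a.2.2)
        (fun hc => hd b.1 b.2.2 hc)
    · exact congrArg Sum.inr (Subtype.ext hval)
  · rintro ⟨x, hA, (hB | hC)⟩
    · exact ⟨Sum.inl ⟨x, hA, hB⟩, rfl⟩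
    · exact ⟨Sum.inr ⟨x, hA, hC⟩, rfl⟩

end DiagramDeg
namespace DiagramDeg

/-- For the Temperley–Lieb monoid `TL_n`: if `n = 2k−1` is odd then the
number of projections of `TL_n` of rank `1` or `3` equals `C(k+1) − C(k)`; if `n = 2k` is
even then the number of projections of `TL_n` of rank `0`, `2` or `4` equals
`C(k+2) − 2C(k+1) + C(k)`. (Stated without subtraction.) -/
theorem statement19 (n : ℕ) :
    (∀ k : ℕ, n + 1 = 2 * k →
      Nat.card {α : PD n // (BlocksExactlyTwo α ∧ IsPlanar α) ∧ IsProjection α ∧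
          (rank α = 1 ∨ rank α = 3)} + catalan k = catalan (k + 1)) ∧
    (∀ k : ℕ, n = 2 * k →
      Nat.card {α : PD n // (BlocksExactlyTwo α ∧ IsPlanar α) ∧ IsProjection α ∧
          (rank α = 0 ∨ rank α = 2 ∨ rank α = 4)} + 2 * catalan (k + 1)
        = catalan (k + 2) + catalan k) := by
  constructor
  · intro k hk
    obtain ⟨m, rfl⟩ : ∃ m, k = m + 1 := ⟨k - 1, by omega⟩
    have hn : n = 2 * m + 1 := by omega
    subst hn
    have e1 : Nat.card {α : PD (2 * m + 1) // (BlocksExactlyTwo α ∧ IsPlanar α) ∧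
        IsProjection α ∧ (rank α = 1 ∨ rank α = 3)}
        = P (2 * m + 1) 1 + P (2 * m + 1) 3 := by
      rw [← count_eq (2 * m + 1) 1, ← count_eq (2 * m + 1) 3]
      rw [card_iff _ (fun α : PD (2 * m + 1) =>
        ((BlocksExactlyTwo α ∧ IsPlanar α) ∧ IsProjection α) ∧ (rank α = 1 ∨ rank α = 3))
        (fun α => by tauto)]
      rw [card_splitQ _ _ _ (fun α h1 h2 => by omega)]
      congr 1
      · exact card_iff _ _ (fun α => by tauto)
      · exact card_iff _ _ (fun α => by tauto)
    rw [e1, show m + 1 + 1 = m + 2 from by omega]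
    have h := P_odd m
    omega
  · intro k hk
    subst hk
    have e1 : Nat.card {α : PD (2 * k) // (BlocksExactlyTwo α ∧ IsPlanar α) ∧
        IsProjection α ∧ (rank α = 0 ∨ rank α = 2 ∨ rank α = 4)}
        = P (2 * k) 0 + (P (2 * k) 2 + P (2 * k) 4) := by
      rw [← count_eq (2 * k) 0, ← count_eq (2 * k) 2, ← count_eq (2 * k) 4]
      rw [card_iff _ (fun α : PD (2 * k) =>
        ((BlocksExactlyTwo α ∧ IsPlanar α) ∧ IsProjection α) ∧
          (rank α = 0 ∨ (rank α = 2 ∨ rank α = 4)))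
        (fun α => by tauto)]
      rw [card_splitQ _ _ _ (fun α h1 h2 => by rcases h2 with h2 | h2 <;> omega)]
      congr 1
      · exact card_iff _ _ (fun α => by tauto)
      · rw [card_splitQ _ _ _ (fun α h1 h2 => by omega)]
        congr 1
        · exact card_iff _ _ (fun α => by tauto)
        · exact card_iff _ _ (fun α => by tauto)
    rw [e1]
    have h := P_even k
    omega

end DiagramDeg
end
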